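/- arXiv:1508.05152 — 6 statements merged into one kernel-verified Lean document; each statement's English description precedes it below -/
import Mathlib

section
/- Let n be an integer divisible by 6 and let V = X ∪ Y be a set of n vertices with X ∩ Y = ∅ and |X| = n/3 − 1. Let H₀ be the 3-graph on V whose edges are exactly the 3-element subsets of V that intersect X. Then δ₂(H₀) = n/3 − 1 and H₀ does not contain a C₆³-factor. -/
/-!
A pair of vertices outside `X` lies in exactly `|X|` edges of `H₀`, and any other pair in `n - 2`
of them, which gives the codegree. No vertex lies on all three edges of `C₆³`, and every edge of
`H₀` meets `X`, so every copy of `C₆³` in `H₀` has at least two of its six vertices in `X`. A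
`C₆³`-factor would therefore force `n ≤ 3|X| = n - 3`.
-/

/-- The degree of a vertex set `S` in the hypergraph with edge set `E`:
the number of edges containing `S`. -/
def degS {n : ℕ} (E : Finset (Finset (Fin n))) (S : Finset (Fin n)) : ℕ :=
  (E.filter (fun e => S ⊆ e)).card

/-- `s` spans a copy of `C₆³` (edges 123, 345, 561) in the 3-graph with edge set `E`. -/
def IsC6Copy {n : ℕ} (E : Finset (Finset (Fin n))) (s : Finset (Fin n)) : Prop :=
  ∃ v : Fin 6 → Fin n, Function.Injective v ∧
    s = {v 0, v 1, v 2, v 3, v 4, v 5} ∧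
    {v 0, v 1, v 2} ∈ E ∧ {v 2, v 3, v 4} ∈ E ∧ {v 4, v 5, v 0} ∈ E

/-- The set `W` can be perfectly tiled by vertex-disjoint copies of `C₆³`
(seen as a `C₆³`-factor of the subhypergraph induced on `W`). -/
def HasC6Factor {n : ℕ} (E : Finset (Finset (Fin n))) (W : Finset (Fin n)) : Prop :=
  ∃ P : Finset (Finset (Fin n)), (∀ s ∈ P, IsC6Copy E s) ∧
    (∀ s ∈ P, ∀ t ∈ P, s ≠ t → Disjoint s t) ∧ P.biUnion id = W

open Finset

def triplesMeeting {n : ℕ} (X : Finset (Fin n)) : Finset (Finset (Fin n)) :=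
  (powersetCard 3 univ).filter (fun e => (e ∩ X).Nonempty)

section Codegree

variable {n : ℕ} {E : Finset (Finset (Fin n))} {S T X : Finset (Fin n)}

lemma card_le_degS_of_forall_insert_mem (hTS : Disjoint T S) (hT : ∀ v ∈ T, insert v S ∈ E) :
    #T ≤ degS E S :=
  card_le_card_of_injOn (insert · S) (fun v hv => mem_filter.2 ⟨hT v hv, subset_insert v S⟩)
    ((insert_inj_on S).mono fun _ hv => disjoint_left.1 hTS hv)

lemma mem_triplesMeeting {e : Finset (Fin n)} :
    e ∈ triplesMeeting X ↔ #e = 3 ∧ (e ∩ X).Nonempty := by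
  simp [triplesMeeting, mem_powersetCard]

lemma insert_mem_triplesMeeting {v : Fin n} (hS : #S = 2) (hv : v ∉ S)
    (hX : (insert v S ∩ X).Nonempty) : insert v S ∈ triplesMeeting X :=
  mem_triplesMeeting.2 ⟨by rw [card_insert_of_notMem hv, hS], hX⟩

lemma card_compl_le_degS_triplesMeeting (hS : #S = 2) (hSX : (S ∩ X).Nonempty) :
    #Sᶜ ≤ degS (triplesMeeting X) S :=
  card_le_degS_of_forall_insert_mem disjoint_compl_left fun v hv =>
    insert_mem_triplesMeeting hS (mem_compl.1 hv)
      (hSX.mono (inter_subset_inter_right (subset_insert v S)))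

lemma degS_triplesMeeting_of_disjoint (hS : #S = 2) (hSX : Disjoint S X) :
    degS (triplesMeeting X) S = #X := by
  refine le_antisymm ?_ (card_le_degS_of_forall_insert_mem hSX.symm fun v hv =>
    insert_mem_triplesMeeting hS (disjoint_right.1 hSX hv) ⟨v, mem_inter.2 ⟨mem_insert_self v S, hv⟩⟩)
  -- an edge through `S` is `S` together with its vertex in `X`
  refine (card_le_card fun e he => ?_).trans (card_image_le (s := X) (f := (insert · S)))
  obtain ⟨he, hSe⟩ := mem_filter.1 he
  obtain ⟨he3, x, hx⟩ := mem_triplesMeeting.1 he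
  obtain ⟨hxe, hxX⟩ := mem_inter.1 hx
  refine mem_image.2 ⟨x, hxX, eq_of_subset_of_card_le (insert_subset hxe hSe) ?_⟩
  rw [he3, card_insert_of_notMem (disjoint_right.1 hSX hxX), hS]

end Codegree

section C6

variable {n : ℕ} {E : Finset (Finset (Fin n))} {s W X : Finset (Fin n)}

lemma card_of_isC6Copy (h : IsC6Copy E s) : #s = 6 := by
  obtain ⟨v, hv, rfl, -⟩ := h
  simp [card_insert_of_notMem, hv.eq_iff]

lemma notMem_of_mem_c6Edges {α : Type*} [DecidableEq α] {v : Fin 6 → α}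
    (hv : Function.Injective v) {x : α} (h₁ : x ∈ ({v 0, v 1, v 2} : Finset α))
    (h₂ : x ∈ ({v 2, v 3, v 4} : Finset α)) : x ∉ ({v 4, v 5, v 0} : Finset α) := by
  simp only [mem_insert, mem_singleton] at h₁
  rcases h₁ with rfl | rfl | rfl <;> simp [hv.eq_iff] at h₂ ⊢

lemma two_le_card_inter_of_isC6Copy (hE : ∀ e ∈ E, (e ∩ X).Nonempty) (h : IsC6Copy E s) :
    2 ≤ #(s ∩ X) := by
  obtain ⟨v, hv, rfl, he₁, he₂, he₃⟩ := h
  obtain ⟨x₁, hx₁⟩ := hE _ he₁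
  obtain ⟨x₂, hx₂⟩ := hE _ he₂
  obtain ⟨x₃, hx₃⟩ := hE _ he₃
  simp only [mem_inter] at hx₁ hx₂ hx₃
  have mem_s {x : Fin n} (hx : x ∈ ({v 0, v 1, v 2} : Finset (Fin n)) ∨
      x ∈ ({v 2, v 3, v 4} : Finset (Fin n)) ∨ x ∈ ({v 4, v 5, v 0} : Finset (Fin n))) :
      x ∈ ({v 0, v 1, v 2, v 3, v 4, v 5} : Finset (Fin n)) := by
    simp only [mem_insert, mem_singleton] at hx ⊢
    omega
  by_contra! hlt
  have hcard : #(({v 0, v 1, v 2, v 3, v 4, v 5} : Finset (Fin n)) ∩ X) ≤ 1 := by omega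
  have h₁₂ : x₁ = x₂ := card_le_one.1 hcard _ (mem_inter.2 ⟨mem_s (.inl hx₁.1), hx₁.2⟩) _
    (mem_inter.2 ⟨mem_s (.inr (.inl hx₂.1)), hx₂.2⟩)
  have h₁₃ : x₁ = x₃ := card_le_one.1 hcard _ (mem_inter.2 ⟨mem_s (.inl hx₁.1), hx₁.2⟩) _
    (mem_inter.2 ⟨mem_s (.inr (.inr hx₃.1)), hx₃.2⟩)
  subst h₁₂ h₁₃
  exact notMem_of_mem_c6Edges hv hx₁.1 hx₂.1 hx₃.1

lemma card_le_three_mul_card_inter_of_hasC6Factor (hE : ∀ e ∈ E, (e ∩ X).Nonempty)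
    (h : HasC6Factor E W) : #W ≤ 3 * #(W ∩ X) := by
  obtain ⟨P, hcopy, hdisj, rfl⟩ := h
  have hdisjX : (P : Set (Finset (Fin n))).PairwiseDisjoint (· ∩ X) := fun s hs t ht hst =>
    (hdisj s hs t ht hst).mono inter_subset_left inter_subset_left
  calc #(P.biUnion id) = ∑ s ∈ P, #s := card_biUnion fun s hs t ht hst => hdisj s hs t ht hst
    _ = ∑ _s ∈ P, 3 * 2 := sum_congr rfl fun s hs => card_of_isC6Copy (hcopy s hs)
    _ ≤ ∑ s ∈ P, 3 * #(s ∩ X) := sum_le_sum fun s hs =>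
      Nat.mul_le_mul_left 3 (two_le_card_inter_of_isC6Copy hE (hcopy s hs))
    _ = 3 * #(P.biUnion id ∩ X) := by
      rw [← mul_sum, biUnion_inter, ← card_biUnion hdisjX]; rfl

end C6

theorem extremal_example_general (n : ℕ) (hn : 0 < n) (h6 : 6 ∣ n)
    (X : Finset (Fin n))
    (hX : X.card = n / 3 - 1)
    (E : Finset (Finset (Fin n)))
    (hE : E = (Finset.powersetCard 3 Finset.univ).filter (fun e => (e ∩ X).Nonempty)) :
    (∀ S : Finset (Fin n), S.card = 2 → n / 3 - 1 ≤ degS E S) ∧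
    (∃ S : Finset (Fin n), S.card = 2 ∧ degS E S = n / 3 - 1) ∧
    ¬ HasC6Factor E Finset.univ := by
  replace hE : E = triplesMeeting X := hE
  subst hE
  have hn6 : 6 ≤ n := Nat.le_of_dvd hn h6
  refine ⟨fun S hS => ?_, ?_, fun hfac => ?_⟩
  · by_cases hSX : (S ∩ X).Nonempty
    · have hdeg := card_compl_le_degS_triplesMeeting hS hSX
      rw [card_compl, Fintype.card_fin, hS] at hdeg
      omega
    · rw [degS_triplesMeeting_of_disjoint hS
        (disjoint_iff_inter_eq_empty.2 (not_nonempty_iff_eq_empty.1 hSX)), hX]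
  · obtain ⟨S, hSX, hS⟩ := exists_subset_card_eq (s := Xᶜ) (n := 2)
      (by rw [card_compl, Fintype.card_fin, hX]; omega)
    exact ⟨S, hS, by rw [degS_triplesMeeting_of_disjoint hS
      (subset_compl_iff_disjoint_right.1 hSX), hX]⟩
  · have hcard := card_le_three_mul_card_inter_of_hasC6Factor
      (fun e he => (mem_triplesMeeting.1 he).2) hfac
    rw [card_univ, Fintype.card_fin, univ_inter, hX] at hcard
    omega

/-- the extremal example. For `n` divisible by 6, with `V = X ∪ Y` disjoint,
`|X| = n/3 - 1`, and `H₀` the 3-graph of all triples intersecting `X`, we have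
`δ₂(H₀) = n/3 - 1` and `H₀` has no `C₆³`-factor. -/
theorem extremal_example (n : ℕ) (hn : 0 < n) (h6 : 6 ∣ n)
    (X Y : Finset (Fin n)) (hXY : Disjoint X Y) (hcover : X ∪ Y = Finset.univ)
    (hX : X.card = n / 3 - 1)
    (E : Finset (Finset (Fin n)))
    (hE : E = (Finset.powersetCard 3 Finset.univ).filter (fun e => (e ∩ X).Nonempty)) :
    (∀ S : Finset (Fin n), S.card = 2 → n / 3 - 1 ≤ degS E S) ∧
    (∃ S : Finset (Fin n), S.card = 2 ∧ degS E S = n / 3 - 1) ∧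
    ¬ HasC6Factor E Finset.univ :=
  extremal_example_general n hn h6 X hX E hE
end

section
/- For all β, ε > 0 and integers i₀' > i₀ ≥ 1, there exist β' > 0 and n₀ such that the following holds for all n ≥ n₀. Given an n-vertex 3-graph H and a vertex x ∈ V(H) with |Ñ_{β,i₀}(x)| ≥ εn, then Ñ_{β,i₀}(x) ⊆ Ñ_{β',i₀'}(x); in other words, if x, y ∈ V(H) are (β, i₀)-reachable in H and |Ñ_{β,i₀}(x)| ≥ εn, then x, y are (β', i₀')-reachable in H. -/
/-- The number of reachable `m`-sets for `x` and `y`: sets `S ⊆ V ∖ {x,y}` of size `m`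
such that both `H[{x} ∪ S]` and `H[{y} ∪ S]` contain `C₆³`-factors. -/
noncomputable def numReachSets {n : ℕ} (E : Finset (Finset (Fin n))) (x y : Fin n) (m : ℕ) : ℕ :=
  {S : Finset (Fin n) | S.card = m ∧ x ∉ S ∧ y ∉ S ∧
    HasC6Factor E (insert x S) ∧ HasC6Factor E (insert y S)}.ncard

/-- `x` and `y` are `(β, i)`-reachable: there are at least `β·n^(6i-1)` reachable
`(6i-1)`-sets for `x` and `y`. -/
def IsReachable {n : ℕ} (β : ℝ) (i : ℕ) (E : Finset (Finset (Fin n))) (x y : Fin n) : Prop :=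
  β * (n : ℝ) ^ (6 * i - 1) ≤ (numReachSets E x y (6 * i - 1) : ℝ)

/-- `Ñ_{β,i}(x)`: the set of vertices `(β, i)`-reachable to `x`. -/
def tildeN {n : ℕ} (β : ℝ) (i : ℕ) (E : Finset (Finset (Fin n))) (x : Fin n) : Set (Fin n) :=
  {y | y ≠ x ∧ IsReachable β i E x y}

/-!
Double counting, twice. Each of the at least `εn` vertices `z` reachable to `x` has at least
`βn^(6i₀-1)` reachable sets `T`, and `{z} ∪ T` spans a `C₆³`-factor; as a `6i₀`-set arises from
at most `6i₀` such pairs, there are `Ω(n^(6i₀))` such sets, hence `Ω(n⁶)` copies of `C₆³`, of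
which only `O(n⁵)` meet a given set of bounded size. Adding to a reachable `(6i-1)`-set `S` for
`x, y` a copy disjoint from `S ∪ {x, y}` gives a reachable `(6i+5)`-set, and each such set arises
from at most `C(6i+5, 6)` sets `S`. So if at least `c n⁶` copies avoid each such set,
`(b, i)`-reachability gives `(b c / C(6i+5, 6), i+1)`-reachability; iterate from `i₀` to `i₀'`.
-/

open Finset

section Supersets

variable {α : Type*} [Fintype α] [DecidableEq α]

theorem Finset.card_supersets_le (s : Finset α) (m : ℕ) :
    #{t : Finset α | #t = m ∧ s ⊆ t} ≤ Fintype.card α ^ (m - #s) :=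
  calc #{t : Finset α | #t = m ∧ s ⊆ t}
      ≤ #(powersetCard (m - #s) (univ : Finset α)) := by
        refine card_le_card_of_injOn (· \ s) (fun t ht => ?_) (fun t ht u hu htu => ?_)
        · simp only [mem_coe, mem_filter, mem_univ, true_and] at ht
          simp [card_sdiff_of_subset ht.2, ht.1]
        · simp only [mem_coe, mem_filter, mem_univ, true_and] at ht hu
          rw [← sdiff_union_of_subset ht.2, ← sdiff_union_of_subset hu.2]
          exact congrArg (· ∪ s) htu
    _ = (Fintype.card α).choose (m - #s) := by simp
    _ ≤ _ := Nat.choose_le_pow _ _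

theorem Finset.card_le_card_mul_pow_of_forall_exists_subset {𝒰 𝒞 : Finset (Finset α)} {m k : ℕ}
    (h𝒰 : ∀ U ∈ 𝒰, #U = m) (h𝒞 : ∀ C ∈ 𝒞, #C = k) (hsub : ∀ U ∈ 𝒰, ∃ C ∈ 𝒞, C ⊆ U) :
    #𝒰 ≤ #𝒞 * Fintype.card α ^ (m - k) :=
  calc #𝒰 ≤ #(𝒞.biUnion fun C => {t : Finset α | #t = m ∧ C ⊆ t}) := by
        refine card_le_card fun U hU => ?_
        obtain ⟨C, hC, hCU⟩ := hsub U hU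
        simpa using ⟨C, hC, h𝒰 U hU, hCU⟩
    _ ≤ ∑ C ∈ 𝒞, #{t : Finset α | #t = m ∧ C ⊆ t} := card_biUnion_le
    _ ≤ ∑ _C ∈ 𝒞, Fintype.card α ^ (m - k) :=
        sum_le_sum fun C hC => h𝒞 C hC ▸ card_supersets_le C m
    _ = #𝒞 * Fintype.card α ^ (m - k) := by rw [sum_const, smul_eq_mul]

theorem Finset.card_le_card_filter_disjoint_add {𝒯 : Finset (Finset α)} {k : ℕ}
    (h𝒯 : ∀ t ∈ 𝒯, #t = k) (F : Finset α) :
    #𝒯 ≤ #{t ∈ 𝒯 | Disjoint t F} + #F * Fintype.card α ^ (k - 1) := by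
  rw [← card_filter_add_card_filter_not (Disjoint · F)]
  gcongr
  calc #{t ∈ 𝒯 | ¬Disjoint t F}
      ≤ #(F.image ({·})) * Fintype.card α ^ (k - 1) := by
        refine card_le_card_mul_pow_of_forall_exists_subset (fun t ht => h𝒯 t (mem_filter.1 ht).1)
          (by simp) fun t ht => ?_
        obtain ⟨v, hvt, hvF⟩ := not_disjoint_iff.1 (mem_filter.1 ht).2
        exact ⟨{v}, mem_image_of_mem _ hvF, singleton_subset_iff.2 hvt⟩
    _ ≤ #F * Fintype.card α ^ (k - 1) := by gcongr; exact card_image_le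

end Supersets

section C6Factors

variable {n : ℕ} {E : Finset (Finset (Fin n))}

theorem IsC6Copy.card_eq {s : Finset (Fin n)} (h : IsC6Copy E s) : #s = 6 := by
  obtain ⟨v, hv, rfl, -⟩ := h
  simp [card_insert_of_notMem, hv.eq_iff]

namespace HasC6Factor

theorem union {A B : Finset (Fin n)} (hA : HasC6Factor E A) (hB : HasC6Factor E B)
    (hAB : Disjoint A B) : HasC6Factor E (A ∪ B) := by
  obtain ⟨P, hPcopy, hPdisj, rfl⟩ := hA
  obtain ⟨Q, hQcopy, hQdisj, rfl⟩ := hB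
  classical
  refine ⟨P ∪ Q, fun s hs => (mem_union.1 hs).elim (hPcopy s) (hQcopy s), ?_, union_biUnion⟩
  intro s hs t ht hst
  rcases mem_union.1 hs with hs | hs <;> rcases mem_union.1 ht with ht | ht
  · exact hPdisj s hs t ht hst
  · exact hAB.mono (subset_biUnion_of_mem id hs) (subset_biUnion_of_mem id ht)
  · exact hAB.symm.mono (subset_biUnion_of_mem id hs) (subset_biUnion_of_mem id ht)
  · exact hQdisj s hs t ht hst

theorem exists_subset_card_eq_six {W : Finset (Fin n)} (h : HasC6Factor E W)
    (hW : W.Nonempty) : ∃ C ⊆ W, #C = 6 ∧ HasC6Factor E C := by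
  obtain ⟨P, hPcopy, -, rfl⟩ := h
  obtain ⟨C, hC, -⟩ := mem_biUnion.1 hW.choose_spec
  exact ⟨C, subset_biUnion_of_mem id hC, (hPcopy C hC).card_eq,
    {C}, by simpa using hPcopy C hC, by simp, by simp⟩

end HasC6Factor

open scoped Classical in
noncomputable def c6FactorSets (E : Finset (Finset (Fin n))) (m : ℕ) : Finset (Finset (Fin n)) :=
  {U | #U = m ∧ HasC6Factor E U}

open scoped Classical in
noncomputable def reachSets (E : Finset (Finset (Fin n))) (x y : Fin n) (m : ℕ) :
    Finset (Finset (Fin n)) :=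
  {S | #S = m ∧ x ∉ S ∧ y ∉ S ∧ HasC6Factor E (insert x S) ∧ HasC6Factor E (insert y S)}

theorem mem_c6FactorSets {m : ℕ} {U : Finset (Fin n)} :
    U ∈ c6FactorSets E m ↔ #U = m ∧ HasC6Factor E U := by
  simp [c6FactorSets]

theorem mem_reachSets {x y : Fin n} {m : ℕ} {S : Finset (Fin n)} :
    S ∈ reachSets E x y m ↔
      #S = m ∧ x ∉ S ∧ y ∉ S ∧ HasC6Factor E (insert x S) ∧ HasC6Factor E (insert y S) := by
  simp [reachSets]

theorem isReachable_iff {β : ℝ} {i : ℕ} {x y : Fin n} :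
    IsReachable β i E x y ↔ β * n ^ (6 * i - 1) ≤ #(reachSets E x y (6 * i - 1)) := by
  rw [IsReachable, numReachSets, ← Set.ncard_coe_finset]
  congr! 3
  ext S
  simp [mem_reachSets]

theorem card_c6FactorSets_ge {β ε : ℝ} (hβ : 0 ≤ β) {i : ℕ} (hi : 1 ≤ i) {x : Fin n}
    (hx : ε * n ≤ (tildeN β i E x).ncard) :
    ε * β * n ^ (6 * i) ≤ 6 * i * #(c6FactorSets E (6 * i)) := by
  classical
  set m := 6 * i - 1
  set Z := (tildeN β i E x).toFinset
  have hZ : ε * n ≤ #Z := by rwa [Set.ncard_eq_toFinset_card'] at hx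
  have hdouble := card_nsmul_le_card_nsmul (s := Z) (t := c6FactorSets E (6 * i))
    (fun z U => U.erase z ∈ reachSets E x z m ∧ z ∈ U) (m := β * (n : ℝ) ^ m) (n := (6 * i : ℝ))
    (fun z hz => ?_) (fun U hU => ?_)
  · rw [nsmul_eq_mul, nsmul_eq_mul] at hdouble
    calc ε * β * n ^ (6 * i) = ε * n * (β * n ^ m) := by
          rw [show 6 * i = m + 1 by omega]; ring
      _ ≤ #Z * (β * n ^ m) := by gcongr
      _ ≤ _ := by linarith
  · have hreach := isReachable_iff.1 (Set.mem_toFinset.1 hz).2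
    refine hreach.trans ?_
    norm_cast
    calc #(reachSets E x z m) = #((reachSets E x z m).image (insert z)) :=
          (card_image_of_injOn fun T hT T' hT' h => by
            rw [← erase_insert (mem_reachSets.1 hT).2.2.1, h,
              erase_insert (mem_reachSets.1 hT').2.2.1]).symm
      _ ≤ _ := by
          refine card_le_card fun U hU => ?_
          obtain ⟨T, hT, rfl⟩ := mem_image.1 hU
          obtain ⟨hTcard, -, hzT, -, hfactor⟩ := mem_reachSets.1 hT
          refine (mem_bipartiteAbove _).2
            ⟨mem_c6FactorSets.2 ⟨?_, hfactor⟩, ?_, mem_insert_self z T⟩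
          · rw [card_insert_of_notMem hzT, hTcard]; omega
          · rwa [erase_insert hzT]
  · calc (_ : ℝ) ≤ #U := by
          refine Nat.cast_le.2 (card_le_card fun z hz => ?_)
          exact (mem_filter.1 hz).2.2
      _ = 6 * i := by exact_mod_cast (mem_c6FactorSets.1 hU).1

theorem card_c6FactorSets_six_ge {β ε : ℝ} (hβ : 0 ≤ β) {i : ℕ} (hi : 1 ≤ i) {x : Fin n}
    (hx : ε * n ≤ (tildeN β i E x).ncard) :
    ε * β * n ^ 6 ≤ 6 * i * #(c6FactorSets E 6) := by
  rcases n.eq_zero_or_pos with rfl | hn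
  · exact x.elim0
  have hcontain : #(c6FactorSets E (6 * i)) ≤ #(c6FactorSets E 6) * n ^ (6 * i - 6) := by
    simpa using card_le_card_mul_pow_of_forall_exists_subset
      (fun U hU => (mem_c6FactorSets.1 hU).1) (fun C hC => (mem_c6FactorSets.1 hC).1) fun U hU => by
        obtain ⟨hUcard, hfactor⟩ := mem_c6FactorSets.1 hU
        obtain ⟨C, hCU, hC⟩ := hfactor.exists_subset_card_eq_six
          (card_pos.1 (by omega))
        exact ⟨C, mem_c6FactorSets.2 hC, hCU⟩
  have hcontainR : (#(c6FactorSets E (6 * i)) : ℝ) ≤ #(c6FactorSets E 6) * n ^ (6 * i - 6) := by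
    exact_mod_cast hcontain
  refine le_of_mul_le_mul_right ?_ (pow_pos (Nat.cast_pos.2 hn) (6 * i - 6))
  calc ε * β * n ^ 6 * n ^ (6 * i - 6) = ε * β * n ^ (6 * i) := by
        rw [mul_assoc, ← pow_add, show 6 + (6 * i - 6) = 6 * i by omega]
    _ ≤ 6 * i * #(c6FactorSets E (6 * i)) := card_c6FactorSets_ge hβ hi hx
    _ ≤ 6 * i * (#(c6FactorSets E 6) * n ^ (6 * i - 6)) := by gcongr
    _ = _ := by ring

theorem card_c6FactorSets_six_disjoint_ge {β ε : ℝ} (hβ : 0 ≤ β) {i : ℕ} (hi : 1 ≤ i) {x : Fin n}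
    (hx : ε * n ≤ (tildeN β i E x).ncard) {F : Finset (Fin n)} {f : ℕ} (hF : #F ≤ f)
    (hn : 12 * i * f ≤ ε * β * n) :
    ε * β / (12 * i) * n ^ 6 ≤ #{C ∈ c6FactorSets E 6 | Disjoint C F} := by
  have hsplit :
      (#(c6FactorSets E 6) : ℝ) ≤ #{C ∈ c6FactorSets E 6 | Disjoint C F} + #F * n ^ 5 := by
    exact_mod_cast Fintype.card_fin n ▸
      card_le_card_filter_disjoint_add (fun C hC => (mem_c6FactorSets.1 hC).1) F
  have hsmall : 12 * i * (#F * n ^ 5 : ℝ) ≤ ε * β * n ^ 6 :=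
    calc 12 * i * (#F * n ^ 5 : ℝ) ≤ 12 * i * f * n ^ 5 := by
          rw [← mul_assoc]; gcongr
      _ ≤ ε * β * n * n ^ 5 := by gcongr
      _ = ε * β * n ^ 6 := by ring
  rw [div_mul_eq_mul_div, div_le_iff₀ (by positivity)]
  nlinarith [card_c6FactorSets_six_ge hβ hi hx]

theorem union_mem_reachSets {x y : Fin n} {m : ℕ} {S C : Finset (Fin n)}
    (hS : S ∈ reachSets E x y m) (hC : C ∈ c6FactorSets E 6)
    (hdisj : Disjoint C (insert x (insert y S))) : S ∪ C ∈ reachSets E x y (m + 6) := by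
  obtain ⟨hScard, hxS, hyS, hxfactor, hyfactor⟩ := mem_reachSets.1 hS
  obtain ⟨hCcard, hCfactor⟩ := mem_c6FactorSets.1 hC
  obtain ⟨hxC, hyC, hCS⟩ : x ∉ C ∧ y ∉ C ∧ Disjoint C S := by
    simpa only [disjoint_insert_right] using hdisj
  refine mem_reachSets.2 ⟨?_, by simp [hxS, hxC], by simp [hyS, hyC], ?_, ?_⟩
  · rw [card_union_of_disjoint hCS.symm, hScard, hCcard]
  · rw [← insert_union]
    exact hxfactor.union hCfactor (disjoint_insert_left.2 ⟨hxC, hCS.symm⟩)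
  · rw [← insert_union]
    exact hyfactor.union hCfactor (disjoint_insert_left.2 ⟨hyC, hCS.symm⟩)

theorem card_c6FactorSets_six_disjoint_le_card_superset {x y : Fin n} {m : ℕ}
    {S : Finset (Fin n)} (hS : S ∈ reachSets E x y m) :
    #{C ∈ c6FactorSets E 6 | Disjoint C (insert x (insert y S))} ≤
      #{S' ∈ reachSets E x y (m + 6) | S ⊆ S'} := by
  set F := insert x (insert y S)
  have hdisjS : ∀ C ∈ ({C ∈ c6FactorSets E 6 | Disjoint C F} : Finset _), Disjoint S C :=
    fun C hC => ((mem_filter.1 hC).2.mono_right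
      ((subset_insert y S).trans (subset_insert x _))).symm
  calc #{C ∈ c6FactorSets E 6 | Disjoint C F}
      = #({C ∈ c6FactorSets E 6 | Disjoint C F}.image (S ∪ ·)) := by
        refine (card_image_of_injOn fun C hC C' hC' hCC' => ?_).symm
        rw [← union_sdiff_cancel_left (hdisjS C hC), ← union_sdiff_cancel_left (hdisjS C' hC')]
        exact congrArg (· \ S) hCC'
    _ ≤ _ := by
        refine card_le_card fun S' hS' => ?_
        obtain ⟨C, hC, rfl⟩ := mem_image.1 hS'
        exact mem_filter.2 ⟨union_mem_reachSets hS (mem_filter.1 hC).1 (mem_filter.1 hC).2,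
          subset_union_left⟩

theorem IsReachable.succ {b c : ℝ} (hc : 0 ≤ c) {i : ℕ} (hi : 1 ≤ i) {x y : Fin n}
    (hcopies : ∀ F : Finset (Fin n), #F ≤ 6 * i + 1 →
      c * n ^ 6 ≤ #{C ∈ c6FactorSets E 6 | Disjoint C F})
    (h : IsReachable b i E x y) : IsReachable (b * c / (6 * i + 5).choose 6) (i + 1) E x y := by
  classical
  set m := 6 * i - 1
  rw [isReachable_iff] at h ⊢
  rw [show 6 * (i + 1) - 1 = m + 6 by omega]
  have hdouble := card_nsmul_le_card_nsmul (s := reachSets E x y m)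
    (t := reachSets E x y (m + 6)) (· ⊆ ·) (m := c * (n : ℝ) ^ 6)
    (n := ((6 * i + 5).choose 6 : ℝ)) (fun S hS => ?_) (fun S' hS' => ?_)
  · rw [nsmul_eq_mul, nsmul_eq_mul] at hdouble
    rw [div_mul_eq_mul_div, div_le_iff₀ (by exact_mod_cast Nat.choose_pos (by omega))]
    calc b * c * n ^ (m + 6) = b * n ^ m * (c * n ^ 6) := by ring
      _ ≤ #(reachSets E x y m) * (c * n ^ 6) := by gcongr
      _ ≤ _ := hdouble
  · have hF : #(insert x (insert y S)) ≤ 6 * i + 1 := by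
      have := (card_insert_le x (insert y S)).trans (Nat.succ_le_succ (card_insert_le y S))
      rw [(mem_reachSets.1 hS).1] at this
      omega
    exact (hcopies _ hF).trans (Nat.cast_le.2 (card_c6FactorSets_six_disjoint_le_card_superset hS))
  · calc (_ : ℝ) ≤ #(powersetCard m S') := by
          refine Nat.cast_le.2 (card_le_card fun S hS => ?_)
          exact mem_powersetCard.2 ⟨(mem_filter.1 hS).2, (mem_reachSets.1 (mem_filter.1 hS).1).1⟩
      _ = (6 * i + 5).choose 6 := by
          rw [card_powersetCard, (mem_reachSets.1 hS').1, Nat.choose_symm_add,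
            show m + 6 = 6 * i + 5 by omega]

end C6Factors

/-- Proposition 2.1 of Lo–Markström: if `|Ñ_{β,i₀}(x)| ≥ εn` then
`Ñ_{β,i₀}(x) ⊆ Ñ_{β',i₀'}(x)`. -/
theorem reachability_upgrade (β ε : ℝ) (hβ : 0 < β) (hε : 0 < ε)
    (i₀ i₀' : ℕ) (hi₀ : 1 ≤ i₀) (hii : i₀ < i₀') :
    ∃ β' : ℝ, 0 < β' ∧ ∃ n₀ : ℕ, ∀ n : ℕ, n₀ ≤ n →
      ∀ E : Finset (Finset (Fin n)), (∀ e ∈ E, e.card = 3) →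
      ∀ x : Fin n, ε * n ≤ ((tildeN β i₀ E x).ncard : ℝ) →
      tildeN β i₀ E x ⊆ tildeN β' i₀' E x := by
  set c := ε * β / (12 * i₀)
  have hc : 0 < c := by positivity
  set βs : ℕ → ℝ := fun k => β * ∏ i ∈ Ico i₀ k, c / (6 * i + 5).choose 6
  refine ⟨βs i₀', ?_, ⌈72 * i₀ * i₀' / (ε * β)⌉₊, fun n hn E _ x hx y hy => ⟨hy.1, ?_⟩⟩
  · refine mul_pos hβ (prod_pos fun i hi => div_pos hc ?_)
    exact_mod_cast Nat.choose_pos (by linarith [(mem_Ico.1 hi).1])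
  have hn' : 12 * i₀ * (6 * i₀' : ℕ) ≤ ε * β * n := by
    have := (Nat.le_ceil _).trans (Nat.cast_le.2 hn : (_ : ℝ) ≤ n)
    rw [div_le_iff₀ (by positivity)] at this
    push_cast
    linarith
  have hcopies (i : ℕ) (hi : i < i₀') (F : Finset (Fin n)) (hF : #F ≤ 6 * i + 1) :
      c * n ^ 6 ≤ #{C ∈ c6FactorSets E 6 | Disjoint C F} :=
    card_c6FactorSets_six_disjoint_ge hβ.le hi₀ hx (by omega) hn'
  suffices ∀ k, i₀ ≤ k → k ≤ i₀' → IsReachable (βs k) k E x y from this i₀' hii.le le_rfl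
  intro k hk
  induction k, hk using Nat.le_induction with
  | base => intro _; simpa [βs] using hy.2
  | succ k hk ih =>
    intro hk'
    have hβs : βs (k + 1) = βs k * c / (6 * k + 5).choose 6 := by
      simp only [βs, prod_Ico_succ_top hk]
      ring
    rw [hβs]
    exact (ih (by omega)).succ hc.le (by omega) (hcopies k (by omega))
end

section
/- For every b > 0 there exists β₀ > 0 such that for every β with 0 < β ≤ β₀ there exists n₀ such that the following holds for all n ≥ n₀. Suppose H = (V, E) is a 3-graph on n vertices with δ₂(H) ≥ bn. Then for every vertex x ∈ V, |Ñ_{β,1}(x)| ≥ (b − β^{1/3})n. -/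
/- ===== auxiliary lemmas ===== -/

lemma card_filter_prod_eq {α β : Type*} [Fintype α] [Fintype β] [DecidableEq α]
    (p : α × β → Prop) [DecidablePred p] :
    (Finset.univ.filter p).card = ∑ a : α, (Finset.univ.filter fun z => p (a, z)).card := by
  rw [Finset.card_eq_sum_card_fiberwise (f := Prod.fst) (t := Finset.univ)
    (fun x _ => Finset.mem_univ _)]
  refine Finset.sum_congr rfl fun a _ => ?_
  refine Finset.card_bij' (fun t _ => t.2) (fun z _ => (a, z)) ?_ ?_ ?_ ?_
  · rintro ⟨a', z⟩ ht
    simp only [Finset.mem_filter, Finset.mem_univ, true_and] at ht ⊢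
    obtain ⟨hp, h1⟩ := ht
    subst h1; exact hp
  · intro z hz
    simp only [Finset.mem_filter, Finset.mem_univ, true_and] at hz ⊢
    exact ⟨hz, trivial⟩
  · rintro ⟨a', z⟩ ht
    simp only [Finset.mem_filter] at ht
    simp [ht.2]
  · intro z hz; rfl

lemma peel_lower {α β : Type*} [Fintype α] [Fintype β] [DecidableEq α]
    (p : α × β → Prop) [DecidablePred p] (A : Finset α) (k : ℕ)
    (h : ∀ a ∈ A, k ≤ (Finset.univ.filter fun z => p (a, z)).card) :
    A.card * k ≤ (Finset.univ.filter p).card := by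
  rw [card_filter_prod_eq]
  calc A.card * k = A.card • k := by rw [smul_eq_mul]
    _ ≤ ∑ a ∈ A, (Finset.univ.filter fun z => p (a, z)).card := Finset.card_nsmul_le_sum A _ k h
    _ ≤ ∑ a : α, (Finset.univ.filter fun z => p (a, z)).card :=
        Finset.sum_le_sum_of_subset (Finset.subset_univ A)

lemma peel_upper {α β : Type*} [Fintype α] [Fintype β] [DecidableEq α]
    (p : α × β → Prop) [DecidablePred p] (B : Finset α) (k : ℕ)
    (hB : ∀ a : α, a ∉ B → (Finset.univ.filter fun z => p (a, z)).card = 0)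
    (h : ∀ a ∈ B, (Finset.univ.filter fun z => p (a, z)).card ≤ k) :
    (Finset.univ.filter p).card ≤ B.card * k := by
  rw [card_filter_prod_eq]
  rw [← Finset.sum_subset (Finset.subset_univ B) (fun a _ ha => hB a ha)]
  calc ∑ a ∈ B, (Finset.univ.filter fun z => p (a, z)).card ≤ B.card • k :=
        Finset.sum_le_card_nsmul B _ k h
    _ = B.card * k := by rw [smul_eq_mul]

lemma card_le_two' {α : Type*} [DecidableEq α] (a b : α) : ({a, b} : Finset α).card ≤ 2 :=
  le_trans (Finset.card_insert_le _ _) (by simp)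

lemma card_le_three' {α : Type*} [DecidableEq α] (a b c : α) :
    ({a, b, c} : Finset α).card ≤ 3 :=
  le_trans (Finset.card_insert_le _ _) (by have := card_le_two' b c; omega)

lemma card_le_four' {α : Type*} [DecidableEq α] (a b c d : α) :
    ({a, b, c, d} : Finset α).card ≤ 4 :=
  le_trans (Finset.card_insert_le _ _) (by have := card_le_three' b c d; omega)

lemma card_le_five' {α : Type*} [DecidableEq α] (a b c d e : α) :
    ({a, b, c, d, e} : Finset α).card ≤ 5 :=
  le_trans (Finset.card_insert_le _ _) (by have := card_le_four' b c d e; omega)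

lemma card_le_six' {α : Type*} [DecidableEq α] (a b c d e f : α) :
    ({a, b, c, d, e, f} : Finset α).card ≤ 6 :=
  le_trans (Finset.card_insert_le _ _) (by have := card_le_five' b c d e f; omega)

def Nf {n : ℕ} (E : Finset (Finset (Fin n))) (u v : Fin n) : Finset (Fin n) :=
  Finset.univ.filter (fun w => ({u, v, w} : Finset (Fin n)) ∈ E)

lemma mem_Nf {n : ℕ} {E : Finset (Finset (Fin n))} {u v w : Fin n} :
    w ∈ Nf E u v ↔ ({u, v, w} : Finset (Fin n)) ∈ E := by
  simp [Nf]

lemma notmem_of_mem_Nf {n : ℕ} {E : Finset (Finset (Fin n))}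
    (hE3 : ∀ e ∈ E, e.card = 3) {u v w : Fin n} (h : w ∈ Nf E u v) :
    w ≠ u ∧ w ≠ v := by
  rw [mem_Nf] at h
  have hc := hE3 _ h
  constructor <;> rintro rfl
  · have : ({w, v, w} : Finset (Fin n)) = {w, v} := by
      ext z; simp only [Finset.mem_insert, Finset.mem_singleton]; tauto
    rw [this] at hc
    have := Finset.card_insert_le w ({v} : Finset (Fin n))
    simp at this; omega
  · have : ({u, w, w} : Finset (Fin n)) = {u, w} := by
      ext z; simp only [Finset.mem_insert, Finset.mem_singleton]; tauto
    rw [this] at hc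
    have := Finset.card_insert_le u ({w} : Finset (Fin n))
    simp at this; omega

lemma degS_eq_card_Nf {n : ℕ} {E : Finset (Finset (Fin n))}
    (hE3 : ∀ e ∈ E, e.card = 3) {u v : Fin n} (huv : u ≠ v) :
    degS E {u, v} = (Nf E u v).card := by
  classical
  unfold degS
  symm
  refine Finset.card_bij (fun w _ => ({u, v, w} : Finset (Fin n))) ?_ ?_ ?_
  · intro w hw
    rw [mem_Nf] at hw
    simp only [Finset.mem_filter]
    refine ⟨hw, ?_⟩
    intro z hz
    simp only [Finset.mem_insert, Finset.mem_singleton] at hz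
    rcases hz with rfl | rfl <;> simp
  · intro w1 h1 w2 h2 heq
    have hw1 := notmem_of_mem_Nf hE3 h1
    have heq' : ({u, v, w1} : Finset (Fin n)) = {u, v, w2} := heq
    have : w1 ∈ ({u, v, w2} : Finset (Fin n)) := by
      rw [← heq']; simp
    simp only [Finset.mem_insert, Finset.mem_singleton] at this
    rcases this with rfl | rfl | rfl
    · exact absurd rfl hw1.1
    · exact absurd rfl hw1.2
    · rfl
  · intro e he
    simp only [Finset.mem_filter] at he
    obtain ⟨heE, hsub⟩ := he
    have hcard2 : ({u, v} : Finset (Fin n)).card = 2 := Finset.card_pair huv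
    have h1 : (e \ {u, v}).card = 1 := by
      rw [Finset.card_sdiff_of_subset hsub, hE3 _ heE, hcard2]
    obtain ⟨w, hw⟩ := Finset.card_eq_one.mp h1
    have hwmem : w ∈ e \ ({u, v} : Finset (Fin n)) := by rw [hw]; simp
    rw [Finset.mem_sdiff] at hwmem
    have hwnotin : w ∉ ({u, v} : Finset (Fin n)) := hwmem.2
    have hwe : w ∈ e := hwmem.1
    have hsub2 : ({u, v, w} : Finset (Fin n)) ⊆ e := by
      intro z hz
      simp only [Finset.mem_insert, Finset.mem_singleton] at hz
      rcases hz with rfl | rfl | rfl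
      · exact hsub (by simp)
      · exact hsub (by simp)
      · exact hwe
    have hcard3 : ({u, v, w} : Finset (Fin n)).card = 3 := by
      rw [Finset.card_insert_of_notMem, Finset.card_insert_of_notMem]
      · simp
      · simp only [Finset.mem_singleton]
        intro h; apply hwnotin; simp [h]
      · simp only [Finset.mem_insert, Finset.mem_singleton]
        rintro (rfl | rfl)
        · exact huv rfl
        · apply hwnotin; simp
    have : ({u, v, w} : Finset (Fin n)) = e :=
      Finset.eq_of_subset_of_card_le hsub2 (by rw [hE3 _ heE, hcard3])
    refine ⟨w, ?_, this⟩
    rw [mem_Nf, this]; exact heE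

lemma hasFactor_of_copy {n : ℕ} {E : Finset (Finset (Fin n))} {W : Finset (Fin n)}
    (h : IsC6Copy E W) : HasC6Factor E W := by
  refine ⟨{W}, ?_, ?_, ?_⟩
  · intro s hs; rw [Finset.mem_singleton] at hs; subst hs; exact h
  · intro s hs t ht hne
    rw [Finset.mem_singleton] at hs ht; subst hs; subst ht; exact absurd rfl hne
  · simp

lemma isC6copy_explicit {n : ℕ} {E : Finset (Finset (Fin n))} {a b c d e f : Fin n}
    (hab : a ≠ b) (hac : a ≠ c) (had : a ≠ d) (hae : a ≠ e) (haf : a ≠ f)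
    (hbc : b ≠ c) (hbd : b ≠ d) (hbe : b ≠ e) (hbf : b ≠ f)
    (hcd : c ≠ d) (hce : c ≠ e) (hcf : c ≠ f)
    (hde : d ≠ e) (hdf : d ≠ f) (hef : e ≠ f)
    (h1 : ({a, b, c} : Finset (Fin n)) ∈ E)
    (h2 : ({c, d, e} : Finset (Fin n)) ∈ E)
    (h3 : ({e, f, a} : Finset (Fin n)) ∈ E) :
    IsC6Copy E {a, b, c, d, e, f} := by
  have e5 : (![a, b, c, d, e, f] : Fin 6 → Fin n) 5 = f := rfl
  refine ⟨![a, b, c, d, e, f], ?_, ?_, ?_, ?_, ?_⟩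
  · intro i j hij
    fin_cases i <;> fin_cases j <;> simp_all [Matrix.cons_val_succ, e5]
  · simp [Matrix.cons_val_succ, e5]
  · simpa [Matrix.cons_val_succ, e5] using h1
  · simpa [Matrix.cons_val_succ, e5] using h2
  · simpa [Matrix.cons_val_succ, e5] using h3


/-- All the data needed to certify a reachable 5-set. -/
def Wit {n : ℕ} (E : Finset (Finset (Fin n))) (x y a c d e f : Fin n) : Prop :=
  (a ≠ x) ∧ (c ≠ x ∧ c ≠ a) ∧ (d ≠ x ∧ d ≠ a ∧ d ≠ c) ∧
  (e ≠ x ∧ e ≠ a ∧ e ≠ c ∧ e ≠ d) ∧ (f ≠ x ∧ f ≠ a ∧ f ≠ c ∧ f ≠ d ∧ f ≠ e) ∧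
  (y ≠ x ∧ y ≠ a ∧ y ≠ c ∧ y ≠ d ∧ y ≠ e ∧ y ≠ f) ∧
  (({x, a, c} : Finset (Fin n)) ∈ E ∧ ({c, d, e} : Finset (Fin n)) ∈ E ∧
   ({e, a, f} : Finset (Fin n)) ∈ E ∧ ({a, c, y} : Finset (Fin n)) ∈ E)

lemma wit_reach {n : ℕ} {E : Finset (Finset (Fin n))} {x y a c d e f : Fin n}
    (hw : Wit E x y a c d e f) :
    ({a, c, d, e, f} : Finset (Fin n)).card = 5 ∧
    x ∉ ({a, c, d, e, f} : Finset (Fin n)) ∧ y ∉ ({a, c, d, e, f} : Finset (Fin n)) ∧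
    HasC6Factor E (insert x {a, c, d, e, f}) ∧ HasC6Factor E (insert y {a, c, d, e, f}) := by
  obtain ⟨hax, ⟨hcx, hca⟩, ⟨hdx, hda, hdc⟩, ⟨hex, hea, hec, hed⟩,
    ⟨hfx, hfa, hfc, hfd, hfe⟩, ⟨hYx, hYa, hYc, hYd, hYe, hYf⟩, hE1, hE2, hE3', hE4⟩ := hw
  have hE1' : ({a, x, c} : Finset (Fin n)) ∈ E := by
    rwa [Finset.insert_comm a x ({c} : Finset (Fin n))]
  have hE3'' : ({e, f, a} : Finset (Fin n)) ∈ E := by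
    rw [show ({e, f, a} : Finset (Fin n)) = {e, a, f} by
      rw [show ({f, a} : Finset (Fin n)) = {a, f} from Finset.pair_comm f a]]
    exact hE3'
  have hE4' : ({a, y, c} : Finset (Fin n)) ∈ E := by
    rw [show ({a, y, c} : Finset (Fin n)) = {a, c, y} by
      rw [show ({y, c} : Finset (Fin n)) = {c, y} from Finset.pair_comm y c]]
    exact hE4
  have hcard : ({a, c, d, e, f} : Finset (Fin n)).card = 5 := by
    rw [Finset.card_insert_of_notMem (by
      simp only [Finset.mem_insert, Finset.mem_singleton]
      push_neg
      exact ⟨hca.symm, hda.symm, hea.symm, hfa.symm⟩)]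
    rw [Finset.card_insert_of_notMem (by
      simp only [Finset.mem_insert, Finset.mem_singleton]
      push_neg
      exact ⟨hdc.symm, hec.symm, hfc.symm⟩)]
    rw [Finset.card_insert_of_notMem (by
      simp only [Finset.mem_insert, Finset.mem_singleton]
      push_neg
      exact ⟨hed.symm, hfd.symm⟩)]
    rw [Finset.card_insert_of_notMem (by
      simp only [Finset.mem_singleton]
      exact hfe.symm)]
    rw [Finset.card_singleton]
  have hxS : x ∉ ({a, c, d, e, f} : Finset (Fin n)) := by
    simp only [Finset.mem_insert, Finset.mem_singleton]
    push_neg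
    exact ⟨hax.symm, hcx.symm, hdx.symm, hex.symm, hfx.symm⟩
  have hyS : y ∉ ({a, c, d, e, f} : Finset (Fin n)) := by
    simp only [Finset.mem_insert, Finset.mem_singleton]
    push_neg
    exact ⟨hYa, hYc, hYd, hYe, hYf⟩
  have hxset : insert x ({a, c, d, e, f} : Finset (Fin n))
      = ({a, x, c, d, e, f} : Finset (Fin n)) := Finset.insert_comm x a _
  have hyset : insert y ({a, c, d, e, f} : Finset (Fin n))
      = ({a, y, c, d, e, f} : Finset (Fin n)) := Finset.insert_comm y a _
  refine ⟨hcard, hxS, hyS, ?_, ?_⟩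
  · rw [hxset]
    exact hasFactor_of_copy (isC6copy_explicit
      hax hca.symm hda.symm hea.symm hfa.symm
      hcx.symm hdx.symm hex.symm hfx.symm
      hdc.symm hec.symm hfc.symm
      hed.symm hfd.symm hfe.symm
      hE1' hE2 hE3'')
  · rw [hyset]
    exact hasFactor_of_copy (isC6copy_explicit
      hYa.symm hca.symm hda.symm hea.symm hfa.symm
      hYc hYd hYe hYf
      hdc.symm hec.symm hfc.symm
      hed.symm hfd.symm hfe.symm
      hE4' hE2 hE3'')

lemma card_le_numReach {n : ℕ} {E : Finset (Finset (Fin n))} {x y : Fin n}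
    (Fy : Finset (Fin n × Fin n × Fin n × Fin n × Fin n × Fin n))
    (hmem : ∀ t ∈ Fy, t.2.2.2.2.2 = y ∧ Wit E x y t.1 t.2.1 t.2.2.1 t.2.2.2.1 t.2.2.2.2.1) :
    Fy.card ≤ 3125 * numReachSets E x y 5 := by
  classical
  set g : (Fin n × Fin n × Fin n × Fin n × Fin n × Fin n) → Finset (Fin n) :=
    fun t => {t.1, t.2.1, t.2.2.1, t.2.2.2.1, t.2.2.2.2.1} with hgdef
  have hmul : Fy.card ≤ 3125 * (Fy.image g).card := by
    refine Finset.card_le_mul_card_image (f := g) Fy 3125 ?_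
    intro S hS
    obtain ⟨t0, ht0, hgt0⟩ := Finset.mem_image.mp hS
    have hScard : S.card ≤ 5 := by
      rw [← hgt0]; exact card_le_five' _ _ _ _ _
    have hsub : Fy.filter (fun t => g t = S) ⊆
        S ×ˢ (S ×ˢ (S ×ˢ (S ×ˢ (S ×ˢ ({y} : Finset (Fin n)))))) := by
      intro t ht
      rw [Finset.mem_filter] at ht
      obtain ⟨htF, htS⟩ := ht
      have hlast := (hmem t htF).1
      simp only [Finset.mem_product, Finset.mem_singleton]
      refine ⟨?_, ?_, ?_, ?_, ?_, hlast⟩ <;>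
        (rw [← htS]; simp [hgdef, Finset.mem_insert])
    calc (Fy.filter (fun t => g t = S)).card
        ≤ (S ×ˢ (S ×ˢ (S ×ˢ (S ×ˢ (S ×ˢ ({y} : Finset (Fin n))))))).card :=
          Finset.card_le_card hsub
      _ = S.card * (S.card * (S.card * (S.card * (S.card * 1)))) := by
          simp [Finset.card_product]
      _ ≤ 5 * (5 * (5 * (5 * (5 * 1)))) :=
          Nat.mul_le_mul hScard (Nat.mul_le_mul hScard (Nat.mul_le_mul hScard
            (Nat.mul_le_mul hScard (Nat.mul_le_mul hScard (le_refl 1)))))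
      _ = 3125 := by norm_num
  have himg : (Fy.image g).card ≤ numReachSets E x y 5 := by
    have hsub : ↑(Fy.image g) ⊆ {S : Finset (Fin n) | S.card = 5 ∧ x ∉ S ∧ y ∉ S ∧
        HasC6Factor E (insert x S) ∧ HasC6Factor E (insert y S)} := by
      intro S hS
      simp only [Finset.coe_image, Set.mem_image, Finset.mem_coe] at hS
      obtain ⟨t, htF, rfl⟩ := hS
      obtain ⟨hlast, hw⟩ := hmem t htF
      exact wit_reach hw
    calc (Fy.image g).card
        = (↑(Fy.image g) : Set (Finset (Fin n))).ncard := (Set.ncard_coe_finset _).symm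
      _ ≤ numReachSets E x y 5 := Set.ncard_le_ncard hsub (Set.toFinite _)
  calc Fy.card ≤ 3125 * (Fy.image g).card := hmul
    _ ≤ 3125 * numReachSets E x y 5 := Nat.mul_le_mul_left _ himg

set_option maxHeartbeats 1000000 in
lemma keyineq (b ε β N M : ℝ) (hb0 : 0 < b) (hb1 : b ≤ 1) (hε0 : 0 < ε) (hεb : ε ≤ b)
    (hM1 : b * N ≤ M) (hM2 : M ≤ b * N + 1) (hN : 96 ≤ ε * N) (hM25 : 25 ≤ M)
    (hβ : 6250 * β ≤ ε * b ^ 3) (hβ0 : 0 ≤ β) :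
    (b - ε) * N * (N ^ 2 * M ^ 3) + 3125 * β * N ^ 6
      ≤ (N - 1) * ((M - 2) * ((N - 3) * ((M - 4) * ((M - 5) * (M - 6))))) := by
  have hε1 : ε ≤ 1 := hεb.trans hb1
  have hN0 : 0 < N := by nlinarith
  have hN96 : 96 ≤ N := by nlinarith
  have hM0 : 0 < M := by linarith
  have hMN : M ≤ 2 * N := by nlinarith
  have hcube : b ^ 3 * N ^ 3 ≤ M ^ 3 := by
    have h := pow_le_pow_left₀ (by positivity : (0:ℝ) ≤ b * N) hM1 3
    calc b ^ 3 * N ^ 3 = (b * N) ^ 3 := by ring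
      _ ≤ M ^ 3 := h
  have step1 : 3125 * β * N ^ 6 ≤ (ε / 2) * (N ^ 3 * M ^ 3) := by
    have h1 : 3125 * β * N ^ 6 ≤ (ε * b ^ 3 / 2) * N ^ 6 := by nlinarith [pow_pos hN0 6]
    have h2 : (ε * b ^ 3 / 2) * N ^ 6 = (ε / 2) * (N ^ 3 * (b ^ 3 * N ^ 3)) := by ring
    have h3 : (ε / 2) * (N ^ 3 * (b ^ 3 * N ^ 3)) ≤ (ε / 2) * (N ^ 3 * M ^ 3) := by
      have := mul_le_mul_of_nonneg_left hcube (le_of_lt (pow_pos hN0 3))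
      nlinarith
    linarith
  have h4 : 24 * N + 12 * M ≤ (ε / 2) * N ^ 2 := by nlinarith
  have hA : N ^ 2 - 12 * N ≤ (N - 1) * (N - 3) := by nlinarith
  have hMsq : 625 ≤ M ^ 2 := by nlinarith
  have hMcube : 268 * M ≤ 7 * M ^ 3 := by nlinarith [mul_le_mul_of_nonneg_left hMsq hM0.le]
  have hB : M ^ 4 - 24 * M ^ 3 ≤ (M - 2) * ((M - 4) * ((M - 5) * (M - 6))) := by
    nlinarith [hMcube, sq_nonneg M]
  have hA0 : 0 ≤ N ^ 2 - 12 * N := by nlinarith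
  have hB0 : 0 ≤ M ^ 4 - 24 * M ^ 3 := by
    have h24 : (24:ℝ) ≤ M := by linarith
    have := mul_le_mul_of_nonneg_left h24 (le_of_lt (pow_pos hM0 3))
    nlinarith
  have hprod : (N ^ 2 - 12 * N) * (M ^ 4 - 24 * M ^ 3)
      ≤ (N - 1) * ((M - 2) * ((N - 3) * ((M - 4) * ((M - 5) * (M - 6))))) := by
    have h0 : (0:ℝ) ≤ (N - 1) * (N - 3) := by nlinarith
    have h1 : (N ^ 2 - 12 * N) * (M ^ 4 - 24 * M ^ 3)
        ≤ ((N - 1) * (N - 3)) * ((M - 2) * ((M - 4) * ((M - 5) * (M - 6)))) :=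
      mul_le_mul hA hB hB0 h0
    calc (N ^ 2 - 12 * N) * (M ^ 4 - 24 * M ^ 3)
        ≤ ((N - 1) * (N - 3)) * ((M - 2) * ((M - 4) * ((M - 5) * (M - 6)))) := h1
      _ = (N - 1) * ((M - 2) * ((N - 3) * ((M - 4) * ((M - 5) * (M - 6))))) := by ring
  have hNM3 : (0:ℝ) ≤ N * M ^ 3 := by positivity
  have key : (24 * N + 12 * M) * (N * M ^ 3) ≤ ((ε / 2) * N ^ 2) * (N * M ^ 3) :=
    mul_le_mul_of_nonneg_right h4 hNM3
  have hM4 : b * N ^ 3 * M ^ 3 ≤ N ^ 2 * M ^ 4 := by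
    have h2 : (0:ℝ) ≤ N ^ 2 * M ^ 3 := by positivity
    have := mul_le_mul_of_nonneg_right hM1 h2
    nlinarith
  have h6 : (b - ε / 2) * (N ^ 3 * M ^ 3) ≤ (N ^ 2 - 12 * N) * (M ^ 4 - 24 * M ^ 3) := by
    nlinarith [key, hM4, hNM3]
  have step2 : (b - ε) * N * (N ^ 2 * M ^ 3) + (ε / 2) * (N ^ 3 * M ^ 3)
      = (b - ε / 2) * (N ^ 3 * M ^ 3) := by ring
  linarith
set_option maxHeartbeats 2000000 in
/-- for every `b > 0` there is `β₀ > 0` such that for `0 < β ≤ β₀` and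
sufficiently large `n`, in every `n`-vertex 3-graph with `δ₂(H) ≥ bn` every vertex `x`
satisfies `|Ñ_{β,1}(x)| ≥ (b - β^{1/3})n`. -/
theorem tildeN_large (b : ℝ) (hb : 0 < b) :
    ∃ β₀ : ℝ, 0 < β₀ ∧ ∀ β : ℝ, 0 < β → β ≤ β₀ →
      ∃ n₀ : ℕ, ∀ n : ℕ, n₀ ≤ n →
        ∀ E : Finset (Finset (Fin n)), (∀ e ∈ E, e.card = 3) →
        (∀ S : Finset (Fin n), S.card = 2 → b * n ≤ (degS E S : ℝ)) →
        ∀ x : Fin n, (b - β ^ ((1 : ℝ) / 3)) * n ≤ ((tildeN β 1 E x).ncard : ℝ) := by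
  classical
  refine ⟨min (b ^ 3) ((b ^ 3 / 6250) ^ ((3:ℝ)/2)), lt_min (by positivity) (by positivity), ?_⟩
  intro β hβ0 hββ0
  set ε := β ^ ((1:ℝ)/3) with hεdef
  have hε0 : 0 < ε := Real.rpow_pos_of_pos hβ0 _
  have hβb3 : β ≤ b ^ 3 := hββ0.trans (min_le_left _ _)
  have hεb : ε ≤ b := by
    have h := Real.rpow_le_rpow hβ0.le hβb3 (by norm_num : (0:ℝ) ≤ 1/3)
    rwa [show b ^ 3 = b ^ ((3:ℕ):ℝ) from (Real.rpow_natCast b 3).symm,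
      ← Real.rpow_mul hb.le, show ((3:ℕ):ℝ) * (1/3) = 1 by norm_num, Real.rpow_one] at h
  have hβε : β = ε ^ 3 := by
    rw [hεdef, ← Real.rpow_natCast (β ^ ((1:ℝ)/3)) 3, ← Real.rpow_mul hβ0.le]
    norm_num
  have hβkey : 6250 * β ≤ ε * b ^ 3 := by
    have h1 : β ≤ (b ^ 3 / 6250) ^ ((3:ℝ)/2) := hββ0.trans (min_le_right _ _)
    have h2 : ε ≤ (b ^ 3 / 6250) ^ ((1:ℝ)/2) := by
      have h := Real.rpow_le_rpow hβ0.le h1 (by norm_num : (0:ℝ) ≤ 1/3)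
      rwa [← Real.rpow_mul (by positivity), show ((3:ℝ)/2) * (1/3) = 1/2 by norm_num] at h
    have hsq : ((b ^ 3 / 6250) ^ ((1:ℝ)/2)) ^ (2:ℕ) = b ^ 3 / 6250 := by
      rw [← Real.rpow_natCast _ 2, ← Real.rpow_mul (by positivity)]
      norm_num
    have h3 : ε ^ 2 ≤ b ^ 3 / 6250 := by
      calc ε ^ 2 ≤ ((b ^ 3 / 6250) ^ ((1:ℝ)/2)) ^ (2:ℕ) := pow_le_pow_left₀ hε0.le h2 2
        _ = b ^ 3 / 6250 := hsq
    have := mul_le_mul_of_nonneg_right h3 hε0.le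
    calc 6250 * β = 6250 * (ε ^ 2 * ε) := by rw [hβε]; ring
      _ ≤ 6250 * (b ^ 3 / 6250 * ε) := by nlinarith
      _ = ε * b ^ 3 := by ring
  by_cases hb1 : b ≤ 1
  swap
  · -- vacuous case b > 1
    push_neg at hb1
    refine ⟨2, ?_⟩
    intro n hn E hE3 hdeg x
    exfalso
    have hn0 : 0 < n := by omega
    have hn1 : 1 < n := by omega
    set u : Fin n := ⟨0, hn0⟩
    set v : Fin n := ⟨1, hn1⟩
    have huv : u ≠ v := by simp [u, v, Fin.ext_iff]
    have hdg := hdeg {u, v} (Finset.card_pair huv)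
    rw [degS_eq_card_Nf hE3 huv] at hdg
    have hsub : Nf E u v ⊆ ({u, v} : Finset (Fin n))ᶜ := by
      intro w hw
      have h := notmem_of_mem_Nf hE3 hw
      simp only [Finset.mem_compl, Finset.mem_insert, Finset.mem_singleton]
      tauto
    have hcard : (Nf E u v).card ≤ n - 2 := by
      have h1 := Finset.card_le_card hsub
      rw [Finset.card_compl, Finset.card_pair huv] at h1
      simpa using h1
    have h2 : ((Nf E u v).card : ℝ) ≤ (n : ℝ) - 2 := by
      have : ((Nf E u v).card : ℝ) ≤ ((n - 2 : ℕ) : ℝ) := by exact_mod_cast hcard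
      calc ((Nf E u v).card : ℝ) ≤ ((n - 2 : ℕ) : ℝ) := this
        _ = (n : ℝ) - 2 := by
          rw [Nat.cast_sub (by omega)]; norm_num
    have hn2 : (2:ℝ) ≤ (n:ℝ) := by exact_mod_cast (by omega : 2 ≤ n)
    nlinarith
  -- main case : b ≤ 1
  refine ⟨max (⌈(96:ℝ)/ε⌉₊ + 1) (⌈(25:ℝ)/b⌉₊ + 1), ?_⟩
  intro n hn E hE3 hdeg x
  set m := ⌈b * (n:ℝ)⌉₊ with hmdef
  set N : ℝ := (n : ℝ) with hNdef
  set M : ℝ := (m : ℝ) with hMdef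
  have hn1 : ((⌈(96:ℝ)/ε⌉₊ + 1 : ℕ) : ℕ) ≤ n := le_trans (le_max_left _ _) hn
  have hn2 : (⌈(25:ℝ)/b⌉₊ + 1 : ℕ) ≤ n := le_trans (le_max_right _ _) hn
  have hNe : (96:ℝ)/ε ≤ N := by
    calc (96:ℝ)/ε ≤ (⌈(96:ℝ)/ε⌉₊ : ℝ) := Nat.le_ceil _
      _ ≤ N := by rw [hNdef]; exact_mod_cast by omega
  have hNb : (25:ℝ)/b ≤ N := by
    calc (25:ℝ)/b ≤ (⌈(25:ℝ)/b⌉₊ : ℝ) := Nat.le_ceil _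
      _ ≤ N := by rw [hNdef]; exact_mod_cast by omega
  have hεN : (96:ℝ) ≤ ε * N := by
    rw [mul_comm]; exact (div_le_iff₀ hε0).mp hNe
  have hbN : (25:ℝ) ≤ b * N := by
    rw [mul_comm]; exact (div_le_iff₀ hb).mp hNb
  have hε1 : ε ≤ 1 := hεb.trans hb1
  have hN96 : (96:ℝ) ≤ N := by nlinarith
  have hn96 : 96 ≤ n := by have h := hN96; rw [hNdef] at h; exact_mod_cast h
  have hMge : b * N ≤ M := Nat.le_ceil _
  have hMle : M ≤ b * N + 1 := (Nat.ceil_lt_add_one (by positivity)).le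
  have hM25 : (25:ℝ) ≤ M := le_trans hbN hMge
  have hm25 : 25 ≤ m := by have h := hM25; rw [hMdef] at h; exact_mod_cast h
  -- codegree: every pair has ≥ m common neighbors
  have hNf : ∀ u v : Fin n, u ≠ v → m ≤ (Nf E u v).card := by
    intro u v huv
    apply Nat.ceil_le.mpr
    rw [← degS_eq_card_Nf hE3 huv]
    exact hdeg {u, v} (Finset.card_pair huv)
  -- choose canonical m-subsets
  have hNp : ∀ u v : Fin n, ∃ t : Finset (Fin n),
      t ⊆ Nf E u v ∧ t.card ≤ m ∧ (u ≠ v → t.card = m) := by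
    intro u v
    by_cases huv : u = v
    · exact ⟨∅, Finset.empty_subset _, by simp, fun h => absurd huv h⟩
    · obtain ⟨t, ht1, ht2⟩ := Finset.exists_subset_card_eq (hNf u v huv)
      exact ⟨t, ht1, ht2.le, fun _ => ht2⟩
  choose Np hNp1 hNp2 hNp3 using hNp
  -- the tuple predicate
  set Q : Fin n → Fin n → Fin n → Fin n → Fin n → Fin n → Prop :=
    fun a c d e f y => a ≠ x ∧ (c ∈ Np x a ∧ c ∉ ({x, a} : Finset (Fin n))) ∧
      (d ∉ ({x, a, c} : Finset (Fin n))) ∧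
      (e ∈ Np c d ∧ e ∉ ({x, a, c, d} : Finset (Fin n))) ∧
      (f ∈ Np e a ∧ f ∉ ({x, a, c, d, e} : Finset (Fin n))) ∧
      (y ∈ Nf E a c ∧ y ∉ ({x, a, c, d, e, f} : Finset (Fin n))) with hQdef
  set P : (Fin n × Fin n × Fin n × Fin n × Fin n × Fin n) → Prop :=
    fun t => Q t.1 t.2.1 t.2.2.1 t.2.2.2.1 t.2.2.2.2.1 t.2.2.2.2.2 with hPdef
  set F : Fin n → Finset (Fin n × Fin n × Fin n × Fin n × Fin n × Fin n) :=
    fun y => Finset.univ.filter (fun t => P t ∧ t.2.2.2.2.2 = y) with hFdef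
  have hlow : (n-1) * ((m-2) * ((n-3) * ((m-4) * ((m-5) * (m-6)))))
      ≤ (Finset.univ.filter P).card := by
    have hA1 : ({x}ᶜ : Finset (Fin n)).card = n - 1 := by
      rw [Finset.card_compl, Finset.card_singleton, Fintype.card_fin]
    calc (n-1) * ((m-2) * ((n-3) * ((m-4) * ((m-5) * (m-6)))))
        = ({x}ᶜ : Finset (Fin n)).card * ((m-2) * ((n-3) * ((m-4) * ((m-5) * (m-6))))) := by
          rw [hA1]
      _ ≤ (Finset.univ.filter P).card := by
          refine peel_lower _ _ _ ?_
          intro a ha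
          have hax : a ≠ x := by simpa using ha
          have hxa : x ≠ a := hax.symm
          -- level c
          have hc2 : ({x, a} : Finset (Fin n)).card ≤ 2 := card_le_two' x a
          have hAc : m - 2 ≤ (Np x a \ ({x, a} : Finset (Fin n))).card := by
            have h1 := Finset.le_card_sdiff ({x, a} : Finset (Fin n)) (Np x a)
            have h2 := hNp3 x a hxa
            omega
          calc (m-2) * ((n-3) * ((m-4) * ((m-5) * (m-6))))
              ≤ (Np x a \ ({x, a} : Finset (Fin n))).card
                  * ((n-3) * ((m-4) * ((m-5) * (m-6)))) :=
                Nat.mul_le_mul_right _ hAc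
            _ ≤ _ := by
                refine peel_lower _ _ _ ?_
                intro c hc
                rw [Finset.mem_sdiff] at hc
                obtain ⟨hcNp, hcne⟩ := hc
                have hca : c ≠ a := by
                  intro h; exact hcne (by rw [h]; simp)
                -- level d
                have hd3 : ({x, a, c} : Finset (Fin n)).card ≤ 3 := card_le_three' x a c
                have hAd : n - 3 ≤ (({x, a, c} : Finset (Fin n))ᶜ).card := by
                  rw [Finset.card_compl, Fintype.card_fin]
                  omega
                calc (n-3) * ((m-4) * ((m-5) * (m-6)))
                    ≤ (({x, a, c} : Finset (Fin n))ᶜ).card * ((m-4) * ((m-5) * (m-6))) :=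
                      Nat.mul_le_mul_right _ hAd
                  _ ≤ _ := by
                      refine peel_lower _ _ _ ?_
                      intro d hd
                      rw [Finset.mem_compl] at hd
                      have hdc : d ≠ c := by
                        intro h; exact hd (by rw [h]; simp)
                      have hcd : c ≠ d := hdc.symm
                      -- level e
                      have he4 : ({x, a, c, d} : Finset (Fin n)).card ≤ 4 := card_le_four' x a c d
                      have hAe : m - 4 ≤ (Np c d \ ({x, a, c, d} : Finset (Fin n))).card := by
                        have h1 := Finset.le_card_sdiff ({x, a, c, d} : Finset (Fin n)) (Np c d)
                        have h2 := hNp3 c d hcd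
                        omega
                      calc (m-4) * ((m-5) * (m-6))
                          ≤ (Np c d \ ({x, a, c, d} : Finset (Fin n))).card * ((m-5) * (m-6)) :=
                            Nat.mul_le_mul_right _ hAe
                        _ ≤ _ := by
                            refine peel_lower _ _ _ ?_
                            intro e he
                            rw [Finset.mem_sdiff] at he
                            obtain ⟨heNp, hene⟩ := he
                            have hea : e ≠ a := by
                              intro h; exact hene (by rw [h]; simp)
                            -- level f
                            have hf5 : ({x, a, c, d, e} : Finset (Fin n)).card ≤ 5 :=
                              card_le_five' x a c d e
                            have hAf : m - 5 ≤
                                (Np e a \ ({x, a, c, d, e} : Finset (Fin n))).card := by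
                              have h1 := Finset.le_card_sdiff
                                ({x, a, c, d, e} : Finset (Fin n)) (Np e a)
                              have h2 := hNp3 e a hea
                              omega
                            calc (m-5) * (m-6)
                                ≤ (Np e a \ ({x, a, c, d, e} : Finset (Fin n))).card * (m-6) :=
                                  Nat.mul_le_mul_right _ hAf
                              _ ≤ _ := by
                                  refine peel_lower _ _ _ ?_
                                  intro f hf
                                  rw [Finset.mem_sdiff] at hf
                                  obtain ⟨hfNp, hfne⟩ := hf
                                  -- innermost: y
                                  have hac : a ≠ c := hca.symm
                                  have hy6 : ({x, a, c, d, e, f} : Finset (Fin n)).card ≤ 6 :=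
                                    card_le_six' x a c d e f
                                  have hsub : Nf E a c \ ({x, a, c, d, e, f} : Finset (Fin n))
                                      ⊆ Finset.univ.filter (fun z : Fin n =>
                                        P (a, (c, (d, (e, (f, z)))))) := by
                                    intro z hz
                                    rw [Finset.mem_sdiff] at hz
                                    rw [Finset.mem_filter]
                                    exact ⟨Finset.mem_univ _,
                                      hax, ⟨hcNp, hcne⟩, hd, ⟨heNp, hene⟩, ⟨hfNp, hfne⟩,
                                      hz.1, hz.2⟩
                                  have h1 := Finset.le_card_sdiff
                                    ({x, a, c, d, e, f} : Finset (Fin n)) (Nf E a c)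
                                  have h2 := hNf a c hac
                                  have h3 := Finset.card_le_card hsub
                                  omega
  have hfib : (Finset.univ.filter P).card = ∑ y : Fin n, (F y).card := by
    rw [Finset.card_eq_sum_card_fiberwise
      (f := fun t : Fin n × Fin n × Fin n × Fin n × Fin n × Fin n => t.2.2.2.2.2)
      (t := Finset.univ) (fun _ _ => Finset.mem_univ _)]
    refine Finset.sum_congr rfl fun y _ => ?_
    simp only [hFdef]
    rw [Finset.filter_filter]
  have hup : ∀ y : Fin n, (F y).card ≤ n * (m * (n * (m * (m * 1)))) := by
    intro y
    simp only [hFdef]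
    calc (Finset.univ.filter fun t : Fin n × Fin n × Fin n × Fin n × Fin n × Fin n =>
            P t ∧ t.2.2.2.2.2 = y).card
        ≤ (Finset.univ : Finset (Fin n)).card * (m * (n * (m * (m * 1)))) := by
          refine peel_upper _ Finset.univ _ (fun a ha => absurd (Finset.mem_univ a) ha) ?_
          intro a _
          calc _ ≤ (Np x a).card * (n * (m * (m * 1))) := by
                refine peel_upper _ (Np x a) _ ?_ ?_
                · intro c hc
                  refine Finset.card_eq_zero.mpr (Finset.filter_eq_empty_iff.mpr ?_)
                  intro z _
                  rintro ⟨hP, -⟩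
                  exact hc hP.2.1.1
                · intro c _
                  calc _ ≤ (Finset.univ : Finset (Fin n)).card * (m * (m * 1)) := by
                        refine peel_upper _ Finset.univ _
                          (fun d hd => absurd (Finset.mem_univ d) hd) ?_
                        intro d _
                        calc _ ≤ (Np c d).card * (m * 1) := by
                              refine peel_upper _ (Np c d) _ ?_ ?_
                              · intro e he
                                refine Finset.card_eq_zero.mpr
                                  (Finset.filter_eq_empty_iff.mpr ?_)
                                intro z _
                                rintro ⟨hP, -⟩
                                exact he hP.2.2.2.1.1
                              · intro e _
                                calc _ ≤ (Np e a).card * 1 := by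
                                      refine peel_upper _ (Np e a) _ ?_ ?_
                                      · intro f hf
                                        refine Finset.card_eq_zero.mpr
                                          (Finset.filter_eq_empty_iff.mpr ?_)
                                        intro z _
                                        rintro ⟨hP, -⟩
                                        exact hf hP.2.2.2.2.1.1
                                      · intro f _
                                        refine le_trans (Finset.card_le_card ?_)
                                          (le_of_eq (Finset.card_singleton y))
                                        intro z hz
                                        rw [Finset.mem_filter] at hz
                                        rw [Finset.mem_singleton]
                                        exact hz.2.2
                                  _ ≤ m * 1 := Nat.mul_le_mul_right _ (hNp2 e a)
                          _ ≤ m * (m * 1) := Nat.mul_le_mul_right _ (hNp2 c d)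
                    _ = n * (m * (m * 1)) := by rw [Finset.card_univ, Fintype.card_fin]
            _ ≤ m * (n * (m * (m * 1))) := Nat.mul_le_mul_right _ (hNp2 x a)
      _ = n * (m * (n * (m * (m * 1)))) := by rw [Finset.card_univ, Fintype.card_fin]
  have hbad : ∀ y : Fin n, y ≠ x → (F y).card ≤ 3125 * numReachSets E x y 5 := by
    intro y hyx
    refine card_le_numReach (F y) ?_
    intro t htmem
    simp only [hFdef, Finset.mem_filter, Finset.mem_univ, true_and] at htmem
    obtain ⟨hP, hlast⟩ := htmem
    obtain ⟨hax, ⟨hc1, hc2⟩, hd, ⟨he1, he2⟩, ⟨hf1, hf2⟩, hy1, hy2⟩ := hP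
    simp only [Finset.mem_insert, Finset.mem_singleton] at hc2 hd he2 hf2 hy2
    push_neg at hc2 hd he2 hf2 hy2
    rw [hlast] at hy1 hy2
    refine ⟨hlast, hax, hc2, hd, he2, hf2, ?_, ?_, ?_, ?_, ?_⟩
    · exact ⟨hyx, hy2.2⟩
    · exact mem_Nf.mp (hNp1 _ _ hc1)
    · exact mem_Nf.mp (hNp1 _ _ he1)
    · exact mem_Nf.mp (hNp1 _ _ hf1)
    · exact mem_Nf.mp hy1
  have hx : (F x).card = 0 := by
    simp only [hFdef]
    refine Finset.card_eq_zero.mpr (Finset.filter_eq_empty_iff.mpr ?_)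
    intro t _
    rintro ⟨hP, hl⟩
    exact hP.2.2.2.2.2.2 (by rw [hl]; exact Finset.mem_insert_self _ _)
  -- assembly
  set G : Finset (Fin n) := Finset.univ.filter (fun y => y ≠ x ∧ IsReachable β 1 E x y)
    with hGdef
  have hGN : ((tildeN β 1 E x).ncard : ℝ) = (G.card : ℝ) := by
    congr 1
    rw [show tildeN β 1 E x = (G : Set (Fin n)) by ext y; simp [tildeN, hGdef]]
    exact Set.ncard_coe_finset G
  rw [hGN]
  have hK : (0:ℝ) < N ^ 2 * M ^ 3 := by
    have : (0:ℝ) < N := by linarith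
    have : (0:ℝ) < M := by linarith
    positivity
  have hKcast : ((n * (m * (n * (m * (m * 1)))) : ℕ) : ℝ) = N ^ 2 * M ^ 3 := by
    rw [hNdef, hMdef]; push_cast; ring
  have hLcast : (((n-1) * ((m-2) * ((n-3) * ((m-4) * ((m-5) * (m-6)))))  : ℕ) : ℝ)
      = (N - 1) * ((M - 2) * ((N - 3) * ((M - 4) * ((M - 5) * (M - 6))))) := by
    rw [hNdef, hMdef]
    push_cast [Nat.cast_sub (show 1 ≤ n by omega), Nat.cast_sub (show 3 ≤ n by omega),
      Nat.cast_sub (show 2 ≤ m by omega), Nat.cast_sub (show 4 ≤ m by omega),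
      Nat.cast_sub (show 5 ≤ m by omega), Nat.cast_sub (show 6 ≤ m by omega)]
    ring
  have bound1 : ∑ y ∈ G, ((F y).card : ℝ) ≤ (G.card : ℝ) * (N ^ 2 * M ^ 3) := by
    calc ∑ y ∈ G, ((F y).card : ℝ)
        ≤ G.card • ((n * (m * (n * (m * (m * 1)))) : ℕ) : ℝ) :=
          Finset.sum_le_card_nsmul _ _ _ (fun y _ => by exact_mod_cast hup y)
      _ = (G.card : ℝ) * ((n * (m * (n * (m * (m * 1)))) : ℕ) : ℝ) := nsmul_eq_mul _ _
      _ = (G.card : ℝ) * (N ^ 2 * M ^ 3) := by rw [hKcast]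
  have bound2 : ∑ y ∈ Gᶜ, ((F y).card : ℝ) ≤ N * (3125 * (β * N ^ 5)) := by
    have hyb : ∀ y ∈ Gᶜ, ((F y).card : ℝ) ≤ 3125 * (β * N ^ 5) := by
      intro y hy
      rw [Finset.mem_compl, hGdef, Finset.mem_filter] at hy
      push_neg at hy
      by_cases hxy : y = x
      · subst hxy
        rw [hx]
        push_cast
        have hN0 : (0:ℝ) < N := by linarith
        positivity
      · have hnr : ¬ IsReachable β 1 E x y := fun hr => (hy (Finset.mem_univ y) hxy) hr
        have h5 : (6 * 1 - 1 : ℕ) = 5 := by norm_num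
        unfold IsReachable at hnr
        rw [h5] at hnr
        push_neg at hnr
        have h1 : (numReachSets E x y 5 : ℝ) < β * N ^ 5 := by
          rw [hNdef]; exact_mod_cast hnr
        have h2 : ((F y).card : ℝ) ≤ 3125 * (numReachSets E x y 5 : ℝ) := by
          exact_mod_cast hbad y hxy
        linarith
    calc ∑ y ∈ Gᶜ, ((F y).card : ℝ) ≤ Gᶜ.card • (3125 * (β * N ^ 5)) :=
          Finset.sum_le_card_nsmul _ _ _ hyb
      _ = (Gᶜ.card : ℝ) * (3125 * (β * N ^ 5)) := nsmul_eq_mul _ _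
      _ ≤ N * (3125 * (β * N ^ 5)) := by
          apply mul_le_mul_of_nonneg_right
          · have h1 : Gᶜ.card ≤ n := le_trans (Finset.card_le_univ _) (by simp)
            rw [hNdef]
            exact_mod_cast h1
          · have hN0 : (0:ℝ) < N := by linarith
            positivity
  have hchain : (N - 1) * ((M - 2) * ((N - 3) * ((M - 4) * ((M - 5) * (M - 6)))))
      ≤ (G.card : ℝ) * (N ^ 2 * M ^ 3) + 3125 * β * N ^ 6 := by
    calc (N - 1) * ((M - 2) * ((N - 3) * ((M - 4) * ((M - 5) * (M - 6)))))
        = (((n-1) * ((m-2) * ((n-3) * ((m-4) * ((m-5) * (m-6)))))  : ℕ) : ℝ) := hLcast.symm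
      _ ≤ ((Finset.univ.filter P).card : ℝ) := by exact_mod_cast hlow
      _ = ∑ y : Fin n, ((F y).card : ℝ) := by rw [hfib]; push_cast; rfl
      _ = ∑ y ∈ G, ((F y).card : ℝ) + ∑ y ∈ Gᶜ, ((F y).card : ℝ) :=
          (Finset.sum_add_sum_compl G _).symm
      _ ≤ (G.card : ℝ) * (N ^ 2 * M ^ 3) + N * (3125 * (β * N ^ 5)) := add_le_add bound1 bound2
      _ = (G.card : ℝ) * (N ^ 2 * M ^ 3) + 3125 * β * N ^ 6 := by ring
  have hkey := keyineq b ε β N M hb hb1 hε0 hεb hMge hMle hεN hM25 hβkey hβ0.le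
  have hfinal : ((b - ε) * N) * (N ^ 2 * M ^ 3) ≤ (G.card : ℝ) * (N ^ 2 * M ^ 3) := by
    linarith [hkey, hchain]
  exact le_of_mul_le_mul_right hfinal hK
end

section
/- There exists γ₀ > 0 such that for every γ with 0 < γ ≤ γ₀ there exists n₀ such that the following holds for all n ≥ n₀. Let H = (V, E) be an n-vertex 3-graph with δ₂(H) ≥ (1/3 − γ)n. Suppose A ∪ B is a bipartition of V such that |A|, |B| ≥ n/3 − 2γn. Then there is a copy of C₆³ in H that intersects A in an odd number of vertices. -/
/-!
Every pair has codegree at least `12`, so its link has at least six vertices in `A` or at least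
six outside `A`; record that side as a weight `σ(uv) ∈ {0, 1}`. Any three vertices `a, b, c` then
extend to a copy `a p₁ b p₂ c p₃` of `C₆³`, taking each pendant `pᵢ` in the link of its pair, on
the recorded side and away from the at most five vertices already used. The copy meets `A` in
`[a ∈ A] + [b ∈ A] + [c ∈ A] + σ(ab) + σ(bc) + σ(ac)` vertices. For one vertex of `A` and three
of `B`, the four triangles they span have weights summing to an odd number modulo `2`, so one of
them is odd.
-/

open Finset

lemma Finset.exists_eq_insert_insert_of_card_eq_three {α : Type*} [DecidableEq α] {e : Finset α}
    {u v : α} (he : #e = 3) (huv : u ≠ v) (hsub : {u, v} ⊆ e) : ∃ z, e = {u, v, z} := by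
  obtain ⟨z, hz⟩ := card_eq_one.1 (show #(e \ {u, v}) = 1 by
    rw [card_sdiff_of_subset hsub, he, card_pair huv])
  refine ⟨z, ?_⟩
  rw [← union_sdiff_of_subset hsub, hz, insert_union, singleton_union]

lemma Finset.exists_mem_notMem_mem_iff {α : Type*} [DecidableEq α] {L F : Finset α}
    (A : Finset α) {m : ℕ} (hL : 2 * m ≤ #L) (hF : #F < m) :
    ∃ w ∈ L, w ∉ F ∧ (w ∈ A ↔ m ≤ #(L ∩ A)) := by
  by_cases hm : m ≤ #(L ∩ A)
  · obtain ⟨w, hw⟩ : ((L ∩ A) \ F).Nonempty := by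
      rw [← card_pos]
      have := le_card_sdiff F (L ∩ A)
      omega
    simp only [mem_sdiff, mem_inter] at hw
    exact ⟨w, hw.1.1, hw.2, iff_of_true hw.1.2 hm⟩
  · obtain ⟨w, hw⟩ : ((L \ A) \ F).Nonempty := by
      rw [← card_pos]
      have := le_card_sdiff F (L \ A)
      have := card_sdiff_add_card_inter L A
      omega
    simp only [mem_sdiff] at hw
    exact ⟨w, hw.1.1, hw.2, iff_of_false hw.1.2 hm⟩

lemma Finset.card_image_inter_eq_sum {ι α : Type*} [Fintype ι] [DecidableEq α] {v : ι → α}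
    (hv : Function.Injective v) (A : Finset α) :
    #(univ.image v ∩ A) = ∑ i, if v i ∈ A then 1 else 0 := by
  rw [← filter_mem_eq_inter, card_filter, sum_image hv.injOn]

/-- Each vertex lies in three of the four triangles and each pair in two of them, so the four
triangle weights add up to the vertex weights modulo `2`. -/
lemma exists_odd_triangle_weight {α : Type*} (f : α → ℕ) (g : α → α → ℕ) {w x y z : α}
    (h : Odd (f w + f x + f y + f z)) :
    Odd (f w + g w x + f x + g x y + f y + g w y) ∨
    Odd (f w + g w x + f x + g x z + f z + g w z) ∨
    Odd (f w + g w y + f y + g y z + f z + g w z) ∨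
    Odd (f x + g x y + f y + g y z + f z + g x z) := by
  simp only [Nat.odd_iff] at h ⊢
  omega

section Hypergraph

variable {n : ℕ} {E : Finset (Finset (Fin n))}

def link (E : Finset (Finset (Fin n))) (u v : Fin n) : Finset (Fin n) :=
  univ.filter fun z => {u, v, z} ∈ E

@[simp]
lemma mem_link {u v w : Fin n} : w ∈ link E u v ↔ {u, v, w} ∈ E := by
  simp [link]

lemma degS_le_card_link (hE : ∀ e ∈ E, #e = 3) {u v : Fin n} (huv : u ≠ v) :
    degS E {u, v} ≤ #(link E u v) := by
  refine card_le_card_of_surjOn (fun z => {u, v, z}) fun e he => ?_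
  simp only [coe_filter, Set.mem_ofPred_eq] at he
  obtain ⟨z, rfl⟩ := exists_eq_insert_insert_of_card_eq_three (hE e he.1) huv he.2
  exact ⟨z, by simpa using he.1, rfl⟩

lemma isC6Copy_image {v : Fin 6 → Fin n} (hv : Function.Injective v)
    (h₀ : {v 0, v 1, v 2} ∈ E) (h₁ : {v 2, v 3, v 4} ∈ E) (h₂ : {v 4, v 5, v 0} ∈ E) :
    IsC6Copy E (univ.image v) :=
  ⟨v, hv, by ext; simp [Fin.exists_fin_succ, eq_comm], h₀, h₁, h₂⟩

def linkSide (E : Finset (Finset (Fin n))) (A : Finset (Fin n)) (u v : Fin n) : ℕ :=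
  if 6 ≤ #(link E u v ∩ A) then 1 else 0

lemma exists_isC6Copy_card_inter_eq (hlink : ∀ u v, u ≠ v → 12 ≤ #(link E u v))
    (A : Finset (Fin n)) {a b c : Fin n} (hab : a ≠ b) (hac : a ≠ c) (hbc : b ≠ c) :
    ∃ s, IsC6Copy E s ∧ #(s ∩ A) =
      (if a ∈ A then 1 else 0) + linkSide E A a b + (if b ∈ A then 1 else 0) +
        linkSide E A b c + (if c ∈ A then 1 else 0) + linkSide E A a c := by
  obtain ⟨p₁, hp₁, hp₁F, hp₁A⟩ := exists_mem_notMem_mem_iff A (m := 6) (hlink a b hab)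
    (F := {a, b, c}) (card_le_three.trans_lt (by norm_num))
  obtain ⟨p₂, hp₂, hp₂F, hp₂A⟩ := exists_mem_notMem_mem_iff A (m := 6) (hlink b c hbc)
    (F := {a, b, c, p₁}) (card_le_four.trans_lt (by norm_num))
  obtain ⟨p₃, hp₃, hp₃F, hp₃A⟩ := exists_mem_notMem_mem_iff A (m := 6) (hlink a c hac)
    (F := {a, b, c, p₁, p₂}) (card_le_five.trans_lt (by norm_num))
  simp only [mem_insert, mem_singleton, not_or] at hp₁F hp₂F hp₃F
  have hv : Function.Injective ![a, p₁, b, p₂, c, p₃] := by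
    rw [← List.nodup_ofFn]
    simp only [List.ofFn_succ, List.ofFn_zero, Matrix.cons_val_zero, Matrix.cons_val_succ]
    grind
  refine ⟨_, isC6Copy_image hv ?_ ?_ ?_, ?_⟩
  · simpa [pair_comm p₁ b] using hp₁
  · simpa [pair_comm p₂ c] using hp₂
  · simpa [pair_comm p₃ a, insert_comm c a] using hp₃
  · rw [card_image_inter_eq_sum hv, Fin.sum_univ_six]
    simp only [linkSide, ← hp₁A, ← hp₂A, ← hp₃A]
    rfl

end Hypergraph

/-- Odd copy lemma: there is `γ₀ > 0` such that for `0 < γ ≤ γ₀` and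
sufficiently large `n`, if `H` is an `n`-vertex 3-graph with `δ₂(H) ≥ (1/3 - γ)n` and
`A ∪ B` is a bipartition of the vertex set with `|A|, |B| ≥ n/3 - 2γn`, then `H` contains
a copy of `C₆³` intersecting `A` in an odd number of vertices. -/
theorem odd_copy_lemma :
    ∃ γ₀ : ℝ, 0 < γ₀ ∧ ∀ γ : ℝ, 0 < γ → γ ≤ γ₀ →
      ∃ n₀ : ℕ, ∀ n : ℕ, n₀ ≤ n →
        ∀ E : Finset (Finset (Fin n)), (∀ e ∈ E, e.card = 3) →
        (∀ S : Finset (Fin n), S.card = 2 → ((1 : ℝ) / 3 - γ) * n ≤ (degS E S : ℝ)) →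
        ∀ A B : Finset (Fin n), Disjoint A B → A ∪ B = Finset.univ →
          (n : ℝ) / 3 - 2 * γ * n ≤ (A.card : ℝ) →
          (n : ℝ) / 3 - 2 * γ * n ≤ (B.card : ℝ) →
          ∃ s : Finset (Fin n), IsC6Copy E s ∧ Odd ((s ∩ A).card) := by
  refine ⟨1 / 12, by norm_num, fun γ _ hγ => ⟨48, fun n hn E hE hdeg A B hAB _ hA hB => ?_⟩⟩
  have hn : (48 : ℝ) ≤ n := by exact_mod_cast hn
  have hlink : ∀ u v, u ≠ v → 12 ≤ #(link E u v) := fun u v huv => by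
    have : (12 : ℝ) ≤ degS E {u, v} := by nlinarith [hdeg {u, v} (card_pair huv)]
    exact le_trans (by exact_mod_cast this) (degS_le_card_link hE huv)
  obtain ⟨a, ha⟩ : A.Nonempty := card_pos.1 (by exact_mod_cast (by nlinarith : (0 : ℝ) < #A))
  obtain ⟨b₁, hb₁, b₂, hb₂, b₃, hb₃, h₁₂, h₁₃, h₂₃⟩ :=
    two_lt_card.1 (by exact_mod_cast (by nlinarith : (2 : ℝ) < #B))
  have hbA : ∀ b ∈ B, b ∉ A := fun b hb => disjoint_right.1 hAB hb
  have ha_ne : ∀ b ∈ B, a ≠ b := fun b hb hab => hbA b hb (hab ▸ ha)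
  have hodd_copy : ∀ {x y z}, x ≠ y → x ≠ z → y ≠ z →
      Odd ((if x ∈ A then 1 else 0) + linkSide E A x y + (if y ∈ A then 1 else 0) +
        linkSide E A y z + (if z ∈ A then 1 else 0) + linkSide E A x z) →
      ∃ s, IsC6Copy E s ∧ Odd #(s ∩ A) := fun hxy hxz hyz hodd =>
    (exists_isC6Copy_card_inter_eq hlink A hxy hxz hyz).imp
      fun _ ⟨hs, hcard⟩ => ⟨hs, hcard ▸ hodd⟩
  rcases exists_odd_triangle_weight (fun x => if x ∈ A then 1 else 0) (linkSide E A)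
    (w := a) (x := b₁) (y := b₂) (z := b₃) (by simp [ha, hbA _ hb₁, hbA _ hb₂, hbA _ hb₃])
    with h | h | h | h
  exacts [hodd_copy (ha_ne _ hb₁) (ha_ne _ hb₂) h₁₂ h, hodd_copy (ha_ne _ hb₁) (ha_ne _ hb₃) h₁₃ h,
    hodd_copy (ha_ne _ hb₂) (ha_ne _ hb₃) h₂₃ h, hodd_copy h₁₂ h₁₃ h₂₃ h]
end

section
/- Fix 0 < γ, γ' < 1 and let G be a graph on vertex set V. Suppose V = V₁ ∪ V₂ with V₁ ∩ V₂ = ∅ and |V₁| ≥ γ'/γ. If the number of edges of G inside V₁ is at least (1 − γ)·C(|V₁|, 2) and the number of edges of G between V₁ and V₂ is at least γ'|V₁||V₂|, then the number of triangles in G with two vertices in V₁ and one vertex in V₂ is at least (γ'² − 2γ)·C(|V₁|, 2)·|V₂|. -/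
/-!
Write `d v` for the number of neighbours in `V₁` of a vertex `v ∈ V₂`. Every pair of
neighbours of `v` in `V₁` is either an edge, giving a triangle through `v`, or one of the at
most `γ·C(|V₁|, 2)` non-edges inside `V₁`; hence the number of triangles is at least
`∑ C(d v, 2) - γ·C(|V₁|, 2)·|V₂|`. The average of `d` is at least `x = γ'|V₁|`, and
`y ↦ C(y, 2)` is convex and increasing from `1/2` on, so `∑ C(d v, 2) ≥ |V₂|·C(x, 2)`.
Finally `|V₁| ≥ γ'/γ` is exactly what makes `C(x, 2) ≥ (γ'² - γ)·C(|V₁|, 2)`, and, when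
`γ'² > 2γ` (otherwise there is nothing to prove), it gives `x > 2`.
-/

/-- The number of edges of `G` between `A` and `B` (counted as pairs in `A × B`). -/
def crossEdges {V : Type*} [DecidableEq V] (G : SimpleGraph V) [DecidableRel G.Adj]
    (A B : Finset V) : ℕ :=
  ((A ×ˢ B).filter (fun p => G.Adj p.1 p.2)).card

open Finset

/-- Tangent-line bound for the convex function `y ↦ y (y - 1)`, which is increasing on
`[1/2, ∞)`. -/
theorem Finset.card_mul_le_sum_mul_sub_one {ι : Type*} (s : Finset ι) (f : ι → ℝ) {x : ℝ}
    (hx : 1 / 2 ≤ x) (hsum : #s * x ≤ ∑ i ∈ s, f i) :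
    #s * (x * (x - 1)) ≤ ∑ i ∈ s, f i * (f i - 1) := by
  have tangent : ∀ i ∈ s, x * (x - 1) + (2 * x - 1) * (f i - x) ≤ f i * (f i - 1) :=
    fun i _ => by nlinarith [sq_nonneg (f i - x)]
  calc (#s : ℝ) * (x * (x - 1))
      ≤ #s * (x * (x - 1)) + (2 * x - 1) * (∑ i ∈ s, f i - #s * x) := by
        have : 0 ≤ (2 * x - 1) * (∑ i ∈ s, f i - #s * x) :=
          mul_nonneg (by linarith) (by linarith)
        linarith
    _ = ∑ i ∈ s, (x * (x - 1) + (2 * x - 1) * (f i - x)) := by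
        rw [sum_add_distrib, sum_const, nsmul_eq_mul, ← mul_sum, sum_sub_distrib, sum_const,
          nsmul_eq_mul]
    _ ≤ ∑ i ∈ s, f i * (f i - 1) := sum_le_sum tangent

theorem Finset.insert_inter_eq_of_disjoint {α : Type*} [DecidableEq α] {A B e : Finset α}
    {v : α} (hAB : Disjoint A B) (hv : v ∈ B) (he : e ⊆ A) :
    insert v e ∩ A = e ∧ insert v e ∩ B = {v} := by
  constructor
  · rw [insert_inter_of_notMem (disjoint_right.mp hAB hv), inter_eq_left.mpr he]
  · rw [insert_inter_of_mem hv, disjoint_iff_inter_eq_empty.mp (hAB.mono_left he)]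
    rfl

namespace SimpleGraph

variable {V : Type*} [DecidableEq V] (G : SimpleGraph V) [DecidableRel G.Adj]

theorem crossEdges_eq_sum_card_adj (A B : Finset V) :
    crossEdges G A B = ∑ v ∈ B, #{a ∈ A | G.Adj v a} := by
  rw [crossEdges, card_filter, sum_product_right]
  refine sum_congr rfl fun v _ => ?_
  rw [card_filter]
  exact sum_congr rfl fun a _ => if_congr (G.adj_comm a v) rfl rfl

/-- A `2`-subset of `S ⊆ A` is either an edge inside `S` or a non-edge inside `A`. -/
theorem choose_two_card_le_of_subset {S A : Finset V} (hSA : S ⊆ A) :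
    (#S).choose 2 ≤
      #{e ∈ S.powersetCard 2 | G.IsNClique 2 e} + #{e ∈ A.powersetCard 2 | ¬G.IsNClique 2 e} := by
  rw [← card_powersetCard, ← card_filter_add_card_filter_not (p := G.IsNClique 2)]
  gcongr
  exact powersetCard_mono hSA

variable [Fintype V]

theorem card_edges_subset_add_card_nonEdges (A : Finset V) :
    #{e ∈ G.cliqueFinset 2 | e ⊆ A} + #{e ∈ A.powersetCard 2 | ¬G.IsNClique 2 e} =
      (#A).choose 2 := by
  have edges_eq : {e ∈ G.cliqueFinset 2 | e ⊆ A} = {e ∈ A.powersetCard 2 | G.IsNClique 2 e} := by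
    ext e
    simp only [mem_filter, mem_powersetCard, mem_cliqueFinset_iff]
    exact ⟨fun ⟨hc, hs⟩ => ⟨⟨hs, hc.card_eq⟩, hc⟩, fun ⟨⟨hs, _⟩, hc⟩ => ⟨hc, hs⟩⟩
  rw [edges_eq, card_filter_add_card_filter_not, card_powersetCard]

/-- Adding `v ∈ B` to an edge among its neighbours in `A` is injective and yields a triangle
with two vertices in `A` and one in `B`. -/
theorem sum_card_edges_adj_le_card_triangles {A B : Finset V} (hAB : Disjoint A B) :
    ∑ v ∈ B, #{e ∈ {a ∈ A | G.Adj v a}.powersetCard 2 | G.IsNClique 2 e} ≤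
      #{t ∈ G.cliqueFinset 3 | #(t ∩ A) = 2 ∧ #(t ∩ B) = 1} := by
  rw [← card_sigma]
  have split : ∀ p ∈ B.sigma fun v => {e ∈ {a ∈ A | G.Adj v a}.powersetCard 2 | G.IsNClique 2 e},
      insert p.1 p.2 ∩ A = p.2 ∧ insert p.1 p.2 ∩ B = {p.1} := by
    rintro ⟨v, e⟩ hp
    simp only [mem_sigma, mem_filter, mem_powersetCard] at hp
    exact insert_inter_eq_of_disjoint hAB hp.1 fun a ha => (mem_filter.mp (hp.2.1.1 ha)).1
  refine card_le_card_of_injOn (fun p => insert p.1 p.2) (fun p hp => ?_) fun p hp q hq hpq => ?_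
  · obtain ⟨hA, hB⟩ := split p hp
    simp only [mem_coe, mem_sigma, mem_filter, mem_powersetCard] at hp
    obtain ⟨-, ⟨hsub, hcard⟩, hclique⟩ := hp
    rw [mem_coe, mem_filter, mem_cliqueFinset_iff, hA, hB, hcard, card_singleton]
    exact ⟨hclique.insert fun b hb => (mem_filter.mp (hsub hb)).2, rfl, rfl⟩
  · obtain ⟨hpA, hpB⟩ := split p hp
    obtain ⟨hqA, hqB⟩ := split q hq
    have hpq : insert p.1 p.2 = insert q.1 q.2 := hpq
    exact Sigma.ext (singleton_injective (hpB.symm.trans (hpq ▸ hqB)))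
      (heq_of_eq (hpA.symm.trans (hpq ▸ hqA)))

theorem sum_choose_two_card_adj_le {A B : Finset V} (hAB : Disjoint A B) :
    ∑ v ∈ B, (#{a ∈ A | G.Adj v a}).choose 2 ≤
      #{t ∈ G.cliqueFinset 3 | #(t ∩ A) = 2 ∧ #(t ∩ B) = 1} +
        #B * #{e ∈ A.powersetCard 2 | ¬G.IsNClique 2 e} :=
  calc ∑ v ∈ B, (#{a ∈ A | G.Adj v a}).choose 2
      ≤ ∑ v ∈ B, (#{e ∈ {a ∈ A | G.Adj v a}.powersetCard 2 | G.IsNClique 2 e} +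
          #{e ∈ A.powersetCard 2 | ¬G.IsNClique 2 e}) :=
        sum_le_sum fun v _ => G.choose_two_card_le_of_subset (filter_subset _ A)
    _ ≤ _ := by
        rw [sum_add_distrib, sum_const, smul_eq_mul]
        gcongr
        exact G.sum_card_edges_adj_le_card_triangles hAB

end SimpleGraph

open SimpleGraph in
theorem triangles_two_one_general {V : Type*} [Fintype V] [DecidableEq V]
    (γ γ' : ℝ) (hγ0 : 0 < γ) (hγ'0 : 0 < γ')
    (G : SimpleGraph V) [DecidableRel G.Adj]
    (V₁ V₂ : Finset V) (hdisj : Disjoint V₁ V₂)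
    (hsize : γ' / γ ≤ (V₁.card : ℝ))
    (he1 : (1 - γ) * ((V₁.card).choose 2 : ℝ) ≤
      (((G.cliqueFinset 2).filter (fun t => t ⊆ V₁)).card : ℝ))
    (he12 : γ' * ((V₁.card : ℝ) * V₂.card) ≤ (crossEdges G V₁ V₂ : ℝ)) :
    (γ' ^ 2 - 2 * γ) * ((V₁.card).choose 2 : ℝ) * (V₂.card : ℝ) ≤
      (((G.cliqueFinset 3).filter
        (fun t => (t ∩ V₁).card = 2 ∧ (t ∩ V₂).card = 1)).card : ℝ) := by
  by_cases hsmall : γ' ^ 2 ≤ 2 * γ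
  · have : (γ' ^ 2 - 2 * γ) * ((#V₁).choose 2 : ℝ) * #V₂ ≤ 0 :=
      mul_nonpos_of_nonpos_of_nonneg (mul_nonpos_of_nonpos_of_nonneg (by linarith)
        (Nat.cast_nonneg _)) (Nat.cast_nonneg _)
    exact this.trans (Nat.cast_nonneg _)
  push Not at hsmall
  rw [div_le_iff₀ hγ0] at hsize
  have hn₁ : (0 : ℝ) ≤ #V₁ := Nat.cast_nonneg _
  have hn₂ : (0 : ℝ) ≤ #V₂ := Nat.cast_nonneg _
  have hx : 1 / 2 ≤ γ' * #V₁ := by nlinarith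
  have hdeg := card_mul_le_sum_mul_sub_one V₂ (fun v => (#{a ∈ V₁ | G.Adj v a} : ℝ)) hx (by
    rw [crossEdges_eq_sum_card_adj, Nat.cast_sum] at he12
    linarith)
  have hcount := G.sum_choose_two_card_adj_le hdisj
  have hnonEdges := G.card_edges_subset_add_card_nonEdges V₁
  simp only [← Nat.cast_le (α := ℝ), ← Nat.cast_inj (R := ℝ), Nat.cast_add, Nat.cast_mul,
    Nat.cast_sum, Nat.cast_choose_two] at hcount hnonEdges he1 ⊢
  rw [← sum_div] at hcount
  have hnonEdges_le : (#{e ∈ V₁.powersetCard 2 | ¬G.IsNClique 2 e} : ℝ) ≤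
      γ * (#V₁ * (#V₁ - 1) / 2) := by linarith
  have hchoose : (γ' ^ 2 - γ) * (#V₁ * (#V₁ - 1)) ≤ γ' * #V₁ * (γ' * #V₁ - 1) := by
    nlinarith
  linarith [mul_le_mul_of_nonneg_left hchoose hn₂, mul_le_mul_of_nonneg_left hnonEdges_le hn₂]

/-- Fact (iii): if `V = V₁ ∪ V₂` with `|V₁| ≥ γ'/γ`, the number of edges
inside `V₁` is at least `(1 - γ)·C(|V₁|, 2)` and `e(V₁, V₂) ≥ γ'|V₁||V₂|`, then the
number of triangles with two vertices in `V₁` and one in `V₂` is at least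
`(γ'² - 2γ)·C(|V₁|, 2)·|V₂|`. -/
theorem triangles_two_one {V : Type*} [Fintype V] [DecidableEq V]
    (γ γ' : ℝ) (hγ0 : 0 < γ) (hγ1 : γ < 1) (hγ'0 : 0 < γ') (hγ'1 : γ' < 1)
    (G : SimpleGraph V) [DecidableRel G.Adj]
    (V₁ V₂ : Finset V) (hdisj : Disjoint V₁ V₂) (hcover : V₁ ∪ V₂ = Finset.univ)
    (hsize : γ' / γ ≤ (V₁.card : ℝ))
    (he1 : (1 - γ) * ((V₁.card).choose 2 : ℝ) ≤
      (((G.cliqueFinset 2).filter (fun t => t ⊆ V₁)).card : ℝ))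
    (he12 : γ' * ((V₁.card : ℝ) * V₂.card) ≤ (crossEdges G V₁ V₂ : ℝ)) :
    (γ' ^ 2 - 2 * γ) * ((V₁.card).choose 2 : ℝ) * (V₂.card : ℝ) ≤
      (((G.cliqueFinset 3).filter
        (fun t => (t ∩ V₁).card = 2 ∧ (t ∩ V₂).card = 1)).card : ℝ) :=
  triangles_two_one_general γ γ' hγ0 hγ'0 G V₁ V₂ hdisj hsize he1 he12
end

section
/- For every μ > 0 there exists n₀ such that for all n ≥ n₀, every 3-graph H on n vertices with at least μn³ edges contains at least μ⁸n⁶/2 copies of K₃³(2). -/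
/-- The number of copies of `K₃³(2)` (the complete 3-partite 3-graph with two vertices in
each part) in the 3-graph with edge set `E`: a copy is identified with its (unordered) set
`Q` of three disjoint parts of size 2 such that every transversal of `Q` is an edge. -/
noncomputable def numK332 {n : ℕ} (E : Finset (Finset (Fin n))) : ℕ :=
  {Q : Finset (Finset (Fin n)) | Q.card = 3 ∧ (∀ p ∈ Q, p.card = 2) ∧
    (∀ p ∈ Q, ∀ q ∈ Q, p ≠ q → Disjoint p q) ∧
    (∀ f : Finset (Fin n) → Fin n, (∀ p ∈ Q, f p ∈ p) → Q.image f ∈ E)}.ncard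

/-!
Let `w x y z` be the indicator of `{x, y, z} ∈ E`. Three applications of
Cauchy–Schwarz, each doubling one coordinate, give `(∑ w)⁸ ≤ n¹⁸ · #boxes`, where a box is a
triple of pairs `(x, y, z)` all eight of whose transversals `{x i, y j, z k}` are edges. Every edge
is hit by at least two ordered triples, so `∑ w ≥ 2μn³` and there are at least `256 μ⁸ n⁶` boxes.
At most `3n⁵` boxes repeat a vertex inside a pair; each of the others spans a copy of `K₃³(2)`,
and a copy is spanned by at most `6³ = 216` boxes.
-/

open Finset

section BoxInequality

variable {α β γ ι κ : Type*} [Fintype α] [Fintype β] [Fintype γ] [Fintype ι] [Fintype κ]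

theorem sq_sum_sum_le_card_mul_sum_prod (f : ι → κ → ℝ) :
    (∑ i, ∑ k, f i k) ^ 2 ≤ Fintype.card ι * ∑ i, ∑ k : Fin 2 → κ, ∏ j, f i (k j) := by
  calc (∑ i, ∑ k, f i k) ^ 2 ≤ Fintype.card ι * ∑ i, (∑ k, f i k) ^ 2 := by
        simpa using sq_sum_le_card_mul_sum_sq (s := univ) (f := fun i => ∑ k, f i k)
    _ = Fintype.card ι * ∑ i, ∑ k : Fin 2 → κ, ∏ j, f i (k j) := by
        simp only [← Fintype.prod_sum, Fin.prod_const]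

def boxSum (w : α → β → γ → ℝ) : ℝ :=
  ∑ x : Fin 2 → α, ∑ y : Fin 2 → β, ∑ z : Fin 2 → γ, ∏ i, ∏ j, ∏ k, w (x i) (y j) (z k)

theorem sum_pow_eight_le_boxSum (w : α → β → γ → ℝ) :
    (∑ x, ∑ y, ∑ z, w x y z) ^ 8 ≤
      (Fintype.card α * Fintype.card β * Fintype.card γ : ℝ) ^ 6 * boxSum w := by
  set a : ℝ := (Fintype.card α : ℝ)
  set b : ℝ := (Fintype.card β : ℝ)
  set c : ℝ := (Fintype.card γ : ℝ)
  set S₀ := ∑ x, ∑ y, ∑ z, w x y z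
  set S₁ := ∑ x, ∑ z : Fin 2 → γ, ∑ y, ∏ k, w x y (z k)
  set S₂ := ∑ z : Fin 2 → γ, ∑ y : Fin 2 → β, ∑ x, ∏ j, ∏ k, w x (y j) (z k)
  have h₁ : S₀ ^ 2 ≤ a * b * S₁ := by
    have := sq_sum_sum_le_card_mul_sum_prod fun p : α × β => w p.1 p.2
    simp only [Fintype.sum_prod_type, Fintype.card_prod, Nat.cast_mul] at this
    exact this.trans_eq <| congrArg _ <| sum_congr rfl fun _ _ => sum_comm
  have h₂ : S₁ ^ 2 ≤ a * c ^ 2 * S₂ := by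
    have := sq_sum_sum_le_card_mul_sum_prod fun (p : α × (Fin 2 → γ)) y => ∏ k, w p.1 y (p.2 k)
    simp only [Fintype.sum_prod_type, Fintype.card_prod, Fintype.card_fun, Fintype.card_fin,
      Nat.cast_mul, Nat.cast_pow] at this
    refine this.trans_eq <| congrArg _ ?_
    rw [sum_comm]
    exact sum_congr rfl fun _ _ => sum_comm
  have h₃ : S₂ ^ 2 ≤ c ^ 2 * b ^ 2 * boxSum w := by
    have := sq_sum_sum_le_card_mul_sum_prod
      fun (p : (Fin 2 → γ) × (Fin 2 → β)) x => ∏ j, ∏ k, w x (p.2 j) (p.1 k)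
    simp only [Fintype.sum_prod_type, Fintype.card_prod, Fintype.card_fun, Fintype.card_fin,
      Nat.cast_mul, Nat.cast_pow] at this
    refine this.trans_eq <| congrArg _ ?_
    refine (sum_congr rfl fun _ _ => sum_comm).trans (sum_comm.trans ?_)
    exact sum_congr rfl fun _ _ => sum_comm
  calc S₀ ^ 8 = ((S₀ ^ 2) ^ 2) ^ 2 := by ring
    _ ≤ (((a * b) * S₁) ^ 2) ^ 2 := by gcongr
    _ = ((a * b) ^ 2 * S₁ ^ 2) ^ 2 := by ring
    _ ≤ ((a * b) ^ 2 * (a * c ^ 2 * S₂)) ^ 2 := by gcongr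
    _ = (a * b) ^ 4 * (a * c ^ 2) ^ 2 * S₂ ^ 2 := by ring
    _ ≤ (a * b) ^ 4 * (a * c ^ 2) ^ 2 * (c ^ 2 * b ^ 2 * boxSum w) := by gcongr
    _ = (a * b * c) ^ 6 * boxSum w := by ring

end BoxInequality

section Copies

variable {V : Type*} [DecidableEq V]

theorem ne_of_card_eq_three {a b c : V} (h : ({a, b, c} : Finset V).card = 3) :
    a ≠ b ∧ a ≠ c ∧ b ≠ c := by
  grind [card_le_two]

theorem eq_or_eq_of_pair_eq_pair {x : Fin 2 → V} {a b : V}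
    (h : ({x 0, x 1} : Finset V) = {a, b}) : x = ![a, b] ∨ x = ![b, a] := by
  have h0 : x 0 ∈ ({a, b} : Finset V) := h ▸ by simp
  have h1 : x 1 ∈ ({a, b} : Finset V) := h ▸ by simp
  have hb : b ∈ ({x 0, x 1} : Finset V) := h ▸ by simp
  simp only [mem_insert, mem_singleton] at h0 h1 hb
  simp only [funext_iff, Fin.forall_fin_two, Matrix.cons_val_zero, Matrix.cons_val_one]
  grind

variable (E : Finset (Finset V))

/-- `numK332 E` is, by definition, the number of `Q` with `IsK332Copy E Q`. -/
def IsK332Copy (Q : Finset (Finset V)) : Prop :=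
  Q.card = 3 ∧ (∀ p ∈ Q, p.card = 2) ∧ (∀ p ∈ Q, ∀ q ∈ Q, p ≠ q → Disjoint p q) ∧
    (∀ f : Finset V → V, (∀ p ∈ Q, f p ∈ p) → Q.image f ∈ E)

def IsBox (x y z : Fin 2 → V) : Prop := ∀ i j k, {x i, y j, z k} ∈ E

instance (x y z : Fin 2 → V) : Decidable (IsBox E x y z) := by
  unfold IsBox; infer_instance

def parts (x y z : Fin 2 → V) : Finset (Finset V) := {{x 0, x 1}, {y 0, y 1}, {z 0, z 1}}

variable {E}

theorem IsBox.isK332Copy_parts (hE : ∀ e ∈ E, e.card = 3) {x y z : Fin 2 → V}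
    (h : IsBox E x y z) (hx : x 0 ≠ x 1) (hy : y 0 ≠ y 1) (hz : z 0 ≠ z 1) :
    IsK332Copy E (parts x y z) := by
  have hne : ∀ i j k, x i ≠ y j ∧ x i ≠ z k ∧ y j ≠ z k := fun i j k =>
    ne_of_card_eq_three (hE _ (h i j k))
  have hxy : Disjoint ({x 0, x 1} : Finset V) {y 0, y 1} := by
    simp [disjoint_left, (hne _ _ 0).1]
  have hxz : Disjoint ({x 0, x 1} : Finset V) {z 0, z 1} := by
    simp [disjoint_left, (hne _ 0 _).2.1]
  have hyz : Disjoint ({y 0, y 1} : Finset V) {z 0, z 1} := by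
    simp [disjoint_left, (hne 0 _ _).2.2]
  have hpair : ∀ a b : V, ({a, b} : Finset V) ≠ ∅ := fun a b => (insert_nonempty a {b}).ne_empty
  refine ⟨?_, ?_, ?_, ?_⟩
  · rw [parts, card_insert_of_notMem, card_pair (hyz.ne (hpair _ _))]
    simp [hxy.ne (hpair _ _), hxz.ne (hpair _ _)]
  · simp [parts, hx, hy, hz]
  · simp only [parts, mem_insert, mem_singleton]
    rintro p (rfl | rfl | rfl) q (rfl | rfl | rfl) hpq <;>
      first | exact absurd rfl hpq | assumption | exact Disjoint.symm ‹_›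
  · intro f hf
    obtain ⟨i, hi⟩ : ∃ i, f {x 0, x 1} = x i := by
      simpa [Fin.exists_fin_two, parts] using hf {x 0, x 1}
    obtain ⟨j, hj⟩ : ∃ j, f {y 0, y 1} = y j := by
      simpa [Fin.exists_fin_two, parts] using hf {y 0, y 1}
    obtain ⟨k, hk⟩ : ∃ k, f {z 0, z 1} = z k := by
      simpa [Fin.exists_fin_two, parts] using hf {z 0, z 1}
    simpa only [parts, image_insert, image_singleton, hi, hj, hk] using h i j k

end Copies

section Counting

variable {V : Type*} [Fintype V] [DecidableEq V]

theorem card_filter_pair_eq_le (p : Finset V) : #{x : Fin 2 → V | {x 0, x 1} = p} ≤ 2 := by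
  rcases (univ.filter fun x : Fin 2 → V => {x 0, x 1} = p).eq_empty_or_nonempty
    with h | ⟨x₀, hx₀⟩
  · simp [h]
  calc _ ≤ #{![x₀ 0, x₀ 1], ![x₀ 1, x₀ 0]} := card_le_card fun x hx => by
          rw [mem_filter] at hx hx₀
          simpa using eq_or_eq_of_pair_eq_pair (hx.2.trans hx₀.2.symm)
    _ ≤ 2 := card_le_two

theorem card_filter_parts_eq_le (s : Finset ((Fin 2 → V) × (Fin 2 → V) × (Fin 2 → V)))
    (Q : Finset (Finset V)) : #{t ∈ s | parts t.1 t.2.1 t.2.2 = Q} ≤ (2 * #Q) ^ 3 := by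
  set A := Q.biUnion fun p => {x : Fin 2 → V | {x 0, x 1} = p}
  have hA : #A ≤ 2 * #Q := by
    rw [mul_comm]
    exact card_biUnion_le_card_mul _ _ _ fun p _ => card_filter_pair_eq_le p
  have hsub : {t ∈ s | parts t.1 t.2.1 t.2.2 = Q} ⊆ A ×ˢ A ×ˢ A := by
    rintro ⟨x, y, z⟩ ht
    simp only [mem_filter] at ht
    simp [A, ← ht.2, parts]
  calc _ ≤ #(A ×ˢ A ×ˢ A) := card_le_card hsub
    _ ≤ (2 * #Q) ^ 3 := by rw [card_product, card_product, pow_three]; gcongr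

theorem card_filter_apply_zero_eq_apply_one_le :
    #{x : Fin 2 → V | x 0 = x 1} ≤ Fintype.card V := by
  refine (card_le_card_of_injOn (fun x => x 0) (fun _ _ => mem_coe.2 (mem_univ _)) ?_).trans_eq
    card_univ
  intro x hx y hy h
  simp only [coe_filter, mem_univ, true_and, Set.mem_ofPred_eq] at hx hy
  ext i; fin_cases i <;> simp_all

variable (E : Finset (Finset V))

def edgeWeight (x y z : V) : ℝ := if {x, y, z} ∈ E then 1 else 0

def boxes : Finset ((Fin 2 → V) × (Fin 2 → V) × (Fin 2 → V)) := {t | IsBox E t.1 t.2.1 t.2.2}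

def nondegBoxes : Finset ((Fin 2 → V) × (Fin 2 → V) × (Fin 2 → V)) :=
  {t ∈ boxes E | t.1 0 ≠ t.1 1 ∧ t.2.1 0 ≠ t.2.1 1 ∧ t.2.2 0 ≠ t.2.2 1}

variable {E}

theorem two_mul_card_le_sum_edgeWeight (hE : ∀ e ∈ E, e.card = 3) :
    2 * (#E : ℝ) ≤ ∑ x, ∑ y, ∑ z, edgeWeight E x y z := by
  have hsum : ∑ x, ∑ y, ∑ z, edgeWeight E x y z =
      #{t : V × V × V | {t.1, t.2.1, t.2.2} ∈ E} := by
    rw [natCast_card_filter, Fintype.sum_prod_type]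
    simp only [Fintype.sum_prod_type, edgeWeight]
  rw [hsum]
  refine mod_cast mul_card_image_le_card_of_maps_to
    (f := fun t : V × V × V => ({t.1, t.2.1, t.2.2} : Finset V))
    (fun t ht => (mem_filter.1 ht).2) 2 fun e he => ?_
  obtain ⟨a, b, c, -, -, hbc, rfl⟩ := card_eq_three.1 (hE e he)
  refine (card_pair (by simp [hbc])).symm.le.trans
    (card_le_card (s := {(a, b, c), (a, c, b)}) fun t ht => ?_)
  simp only [mem_insert, mem_singleton] at ht
  rcases ht with rfl | rfl
  · simpa using he
  · simpa [pair_comm c b] using he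

theorem boxSum_edgeWeight : boxSum (edgeWeight E) = #(boxes E) := by
  rw [boxes, natCast_card_filter]
  simp only [boxSum, edgeWeight, IsBox, prod_boole, mem_univ, true_implies,
    Fintype.sum_prod_type]

theorem card_boxes_le : #(boxes E) ≤ 3 * Fintype.card V ^ 5 + #(nondegBoxes E) := by
  set L : Finset (Fin 2 → V) := {x | x 0 = x 1}
  have hsub : boxes E ⊆
      L ×ˢ univ ×ˢ univ ∪ univ ×ˢ L ×ˢ univ ∪ univ ×ˢ univ ×ˢ L ∪ nondegBoxes E := by
    intro t ht
    simp only [L, nondegBoxes, mem_filter, mem_union, mem_product, mem_univ, true_and] at ht ⊢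
    tauto
  have hL : #L ≤ Fintype.card V := card_filter_apply_zero_eq_apply_one_le
  have hU : #(univ : Finset (Fin 2 → V)) = Fintype.card V ^ 2 := by simp
  calc #(boxes E) ≤ #L * (#univ * #univ) + #univ * (#L * #univ) + #univ * (#univ * #L) +
        #(nondegBoxes E) := by
        refine (card_le_card hsub).trans ?_
        simp only [← card_product]
        grw [card_union_le, card_union_le, card_union_le]
    _ ≤ 3 * Fintype.card V ^ 5 + #(nondegBoxes E) := by
        rw [hU]
        grw [hL]
        exact (by ring : _ = _).le

theorem card_nondegBoxes_le (hE : ∀ e ∈ E, e.card = 3) :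
    #(nondegBoxes E) ≤ 216 * {Q : Finset (Finset V) | IsK332Copy E Q}.ncard := by
  classical
  rw [Set.ncard_eq_toFinset_card']
  refine card_le_mul_card_image_of_maps_to (f := fun t => parts t.1 t.2.1 t.2.2) ?_ _ ?_
  · intro t ht
    simp only [nondegBoxes, boxes, mem_filter, mem_univ, true_and, Set.mem_toFinset,
      Set.mem_ofPred_eq] at ht ⊢
    exact ht.1.isK332Copy_parts hE ht.2.1 ht.2.2.1 ht.2.2.2
  · intro Q hQ
    simp only [Set.mem_toFinset, Set.mem_ofPred_eq] at hQ
    simpa [hQ.1] using card_filter_parts_eq_le _ Q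

end Counting

/-- Supersaturation: for every `μ > 0` and sufficiently large `n`, every
`n`-vertex 3-graph with at least `μn³` edges contains at least `μ⁸n⁶/2` copies of
`K₃³(2)`. -/
theorem supersaturation (μ : ℝ) (hμ : 0 < μ) :
    ∃ n₀ : ℕ, ∀ n : ℕ, n₀ ≤ n →
      ∀ E : Finset (Finset (Fin n)), (∀ e ∈ E, e.card = 3) →
      μ * (n : ℝ) ^ 3 ≤ (E.card : ℝ) →
      μ ^ 8 * (n : ℝ) ^ 6 / 2 ≤ (numK332 E : ℝ) := by
  refine ⟨⌈(μ ^ 8)⁻¹⌉₊, fun n hn E hE hcard => ?_⟩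
  have hμn : 1 ≤ μ ^ 8 * n := by
    rw [← inv_le_iff_one_le_mul₀' (by positivity)]
    exact Nat.ceil_le.1 hn
  have hn : (0 : ℝ) < n := Nat.cast_pos.2 ((Nat.ceil_pos.2 (by positivity)).trans_le hn)
  have hboxes : 256 * μ ^ 8 * (n : ℝ) ^ 6 ≤ #(boxes E) := by
    have hsum : 2 * μ * n ^ 3 ≤ ∑ x, ∑ y, ∑ z, edgeWeight E x y z := by
      linarith [two_mul_card_le_sum_edgeWeight hE]
    have := (pow_le_pow_left₀ (by positivity) hsum 8).trans (sum_pow_eight_le_boxSum _)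
    rw [boxSum_edgeWeight, Fintype.card_fin] at this
    refine le_of_mul_le_mul_left ?_ (by positivity : (0 : ℝ) < (n * n * n) ^ 6)
    linarith
  have hcount : (#(boxes E) : ℝ) ≤ 3 * n ^ 5 + 216 * numK332 E := by
    have := card_boxes_le.trans (Nat.add_le_add_left (card_nondegBoxes_le hE) _)
    rw [Fintype.card_fin] at this
    exact_mod_cast this
  nlinarith [mul_le_mul_of_nonneg_right hμn (by positivity : (0 : ℝ) ≤ n ^ 5)]
end
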